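/- arXiv:math/0412263 — 10 statements merged into one kernel-verified Lean document; each statement's English description precedes it below -/
import Mathlib

section
/- Let G be a finite connected simple graph with edge set E and let U : E → ℝ be injective. Then T_U, defined as the set of edges e ∈ E whose endpoints cannot be joined by a path in G all of whose edges e' satisfy U(e') < U(e), is a spanning tree of G. -/
open SimpleGraph

/-- The set of edges of `G` whose endpoints cannot be joined by a path all of whose
edges have strictly smaller label: the (free) minimal spanning forest / tree of `G`. -/
def mstEdges {V α : Type*} [LinearOrder α] (G : SimpleGraph V) (U : Sym2 V → α) :
    Set (Sym2 V) :=
  {e | e ∈ G.edgeSet ∧ ∀ a b : V, e = s(a, b) →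
    ∀ p : G.Walk a b, p.IsPath → ∃ f ∈ p.edges, U e ≤ U f}

/-- A one-sided infinite simple path in `G`. -/
def IsRay {V : Type*} (G : SimpleGraph V) (r : ℕ → V) : Prop :=
  Function.Injective r ∧ ∀ n : ℕ, G.Adj (r n) (r (n + 1))

/-- The edges of a one-sided infinite path. -/
def rayEdges {V : Type*} (r : ℕ → V) : Set (Sym2 V) :=
  Set.range fun n : ℕ => s(r n, r (n + 1))

/-- The wired minimal spanning forest of `G`: edges such that every extended path
(finite simple path, or pair of disjoint rays from the two endpoints) joining the
endpoints contains an edge of label at least as large. -/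
def wmsfEdges {V : Type*} (G : SimpleGraph V) (U : Sym2 V → ℝ) : Set (Sym2 V) :=
  {e | e ∈ G.edgeSet ∧ ∀ a b : V, e = s(a, b) →
    (∀ p : G.Walk a b, p.IsPath → ∃ f ∈ p.edges, U e ≤ U f) ∧
    (∀ r₁ r₂ : ℕ → V, IsRay G r₁ → IsRay G r₂ → r₁ 0 = a → r₂ 0 = b →
      (∀ m n : ℕ, r₁ m ≠ r₂ n) →
      ∃ f ∈ rayEdges r₁ ∪ rayEdges r₂, U e ≤ U f)}

/-- The edges of `G` joining `W` to its complement. -/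
def cutEdges {V : Type*} (G : SimpleGraph V) (W : Set V) : Set (Sym2 V) :=
  {e | e ∈ G.edgeSet ∧ ∃ a b : V, e = s(a, b) ∧ a ∈ W ∧ b ∉ W}

/-- A bi-infinite simple path in `G`. -/
def IsBiRay {V : Type*} (G : SimpleGraph V) (r : ℤ → V) : Prop :=
  Function.Injective r ∧ ∀ n : ℤ, G.Adj (r n) (r (n + 1))

/-- The edges of a bi-infinite simple path. -/
def biRayEdges {V : Type*} (r : ℤ → V) : Set (Sym2 V) :=
  Set.range fun n : ℤ => s(r n, r (n + 1))

/-- For a finite connected simple graph `G` with injective edge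
labeling `U`, the set `T_U` of edges whose endpoints cannot be joined by a path
all of whose edges have strictly smaller label is a spanning tree of `G`. -/
theorem stmt0 {V : Type*} [Fintype V] (G : SimpleGraph V) (hG : G.Connected)
    (U : Sym2 V → ℝ) (hU : Set.InjOn U G.edgeSet) :
    SimpleGraph.fromEdgeSet (mstEdges G U) ≤ G ∧
    (SimpleGraph.fromEdgeSet (mstEdges G U)).IsTree := by
  classical
  set T := SimpleGraph.fromEdgeSet (mstEdges G U) with hT
  have hsub : mstEdges G U ⊆ G.edgeSet := fun e he => he.1
  have hle : T ≤ G := by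
    intro a b hab
    rw [hT, fromEdgeSet_adj] at hab
    exact (SimpleGraph.mem_edgeSet _).mp (hsub hab.1)
  -- key: endpoints of any edge of G are reachable in T
  have key : ∀ n : ℕ, ∀ e ∈ G.edgeSet, ({f | f ∈ G.edgeSet ∧ U f < U e}.ncard = n) →
      ∀ a b : V, e = s(a, b) → T.Reachable a b := by
    intro n
    induction n using Nat.strong_induction_on with
    | _ n ih =>
      intro e he hn a b heab
      by_cases hm : e ∈ mstEdges G U
      · refine Adj.reachable ?_
        rw [hT, fromEdgeSet_adj]
        refine ⟨heab ▸ hm, G.ne_of_adj ((SimpleGraph.mem_edgeSet _).mp (heab ▸ he))⟩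
      · simp only [mstEdges, Set.mem_setOf_eq, not_and, not_forall, not_exists, not_le] at hm
        obtain ⟨a', b', he', p, hp, hsmall⟩ := hm he
        have walkreach : ∀ {x y : V} (w : G.Walk x y),
            (∀ f ∈ w.edges, U f < U e) → T.Reachable x y := by
          intro x y w
          induction w with
          | nil => exact fun _ => Reachable.refl _
          | @cons u v z h w ihw =>
            intro hw
            have hf : s(u, v) ∈ G.edgeSet := (SimpleGraph.mem_edgeSet _).mpr h
            have hUf : U s(u, v) < U e := hw _ (by simp)
            have hss : {g | g ∈ G.edgeSet ∧ U g < U s(u, v)} ⊂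
                {g | g ∈ G.edgeSet ∧ U g < U e} := by
              constructor
              · intro g hg
                exact ⟨hg.1, hg.2.trans hUf⟩
              · intro hsub2
                exact absurd (hsub2 ⟨hf, hUf⟩).2 (lt_irrefl _)
            have hlt : {g | g ∈ G.edgeSet ∧ U g < U s(u, v)}.ncard < n := by
              rw [← hn]
              exact Set.ncard_lt_ncard hss (Set.toFinite _)
            have r1 := ih _ hlt s(u, v) hf rfl u v rfl
            exact r1.trans (ihw (fun f hfm => hw f (List.mem_cons_of_mem _ hfm)))
        have hr : T.Reachable a' b' := by
          refine walkreach p (fun f hf => ?_)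
          exact hsmall f hf
        rw [he'] at heab
        rcases Sym2.eq_iff.mp heab with ⟨rfl, rfl⟩ | ⟨rfl, rfl⟩
        · exact hr
        · exact hr.symm
  have key' : ∀ a b : V, G.Adj a b → T.Reachable a b := by
    intro a b hab
    exact key _ s(a, b) ((SimpleGraph.mem_edgeSet _).mpr hab) rfl a b rfl
  have hconn : T.Connected := by
    haveI : Nonempty V := hG.nonempty
    refine SimpleGraph.Connected.mk ?_
    intro u v
    obtain ⟨w⟩ := hG.preconnected u v
    induction w with
    | nil => exact Reachable.refl _
    | cons h w ihw => exact (key' _ _ h).trans ihw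
  have hac : T.IsAcyclic := by
    intro v c hc
    have hlen : 3 ≤ c.length := hc.three_le_length
    have hnil : c.edges ≠ [] := by
      intro h
      have h2 := c.length_edges
      rw [h] at h2
      simp at h2
      omega
    obtain ⟨e, hel, hmax⟩ := Finset.exists_max_image c.edges.toFinset U
      ⟨c.edges.head hnil, List.mem_toFinset.mpr (List.head_mem hnil)⟩
    rw [List.mem_toFinset] at hel
    have hmax' : ∀ f ∈ c.edges, U f ≤ U e := fun f hf =>
      hmax f (List.mem_toFinset.mpr hf)
    obtain ⟨a, b, rfl⟩ : ∃ x y, e = s(x, y) :=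
      Sym2.ind (fun x y => ⟨x, y, rfl⟩) e
    have heT : s(a, b) ∈ T.edgeSet := c.edges_subset_edgeSet hel
    have hemst : s(a, b) ∈ mstEdges G U := by
      rw [hT, edgeSet_fromEdgeSet] at heT
      exact heT.1
    have heG : s(a, b) ∈ G.edgeSet := hsub hemst
    have ha : a ∈ c.support := c.fst_mem_support_of_mem_edges hel
    set c₁ := c.rotate a ha with hc₁def
    have hc₁ : c₁.IsCycle := hc.rotate ha
    have hperm : List.Perm c₁.edges c.edges := (c.rotate_edges a ha).perm
    have hel₁ : s(a, b) ∈ c₁.edges := hperm.mem_iff.mpr hel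
    have hb : b ∈ c₁.support := c₁.snd_mem_support_of_mem_edges hel₁
    have hspec := c₁.take_spec hb
    have hnodup : (c₁.takeUntil b hb).edges.Disjoint (c₁.dropUntil b hb).edges := by
      have := hc₁.isTrail.edges_nodup
      rw [← hspec, Walk.edges_append, List.nodup_append] at this
      intro x h1 h2; exact this.2.2 x h1 x h2 rfl
    have hmem : s(a, b) ∈ (c₁.takeUntil b hb).edges ∨
        s(a, b) ∈ (c₁.dropUntil b hb).edges := by
      have : s(a, b) ∈ ((c₁.takeUntil b hb).edges ++ (c₁.dropUntil b hb).edges) := by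
        rw [← Walk.edges_append, hspec]; exact hel₁
      exact List.mem_append.mp this
    -- pick a walk a → b in T avoiding s(a,b), with edges among c₁.edges
    obtain ⟨w, hwsub, hwe⟩ : ∃ w : T.Walk a b, w.edges ⊆ c₁.edges ∧ s(a, b) ∉ w.edges := by
      rcases hmem with h1 | h1
      · refine ⟨(c₁.dropUntil b hb).reverse, ?_, ?_⟩
        · intro f hf
          rw [Walk.edges_reverse, List.mem_reverse] at hf
          rw [← hspec, Walk.edges_append, List.mem_append]
          exact Or.inr hf
        · rw [Walk.edges_reverse, List.mem_reverse]
          exact fun h2 => hnodup h1 h2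
      · refine ⟨c₁.takeUntil b hb, ?_, ?_⟩
        · intro f hf
          rw [← hspec, Walk.edges_append, List.mem_append]
          exact Or.inl hf
        · exact fun h2 => hnodup h2 h1
    have hwG : ∀ f ∈ w.edges, f ∈ G.edgeSet := fun f hf =>
      (SimpleGraph.edgeSet_subset_edgeSet.mpr hle) (w.edges_subset_edgeSet hf)
    set wG := w.transfer G hwG with hwGdef
    have hedges : wG.edges = w.edges := w.edges_transfer hwG
    set p := wG.toPath with hpdef
    obtain ⟨f, hfp, hUef⟩ := hemst.2 a b rfl p p.isPath
    have hfw : f ∈ w.edges := by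
      rw [← hedges]
      exact wG.edges_toPath_subset hfp
    have hfc : f ∈ c.edges := hperm.mem_iff.mp (hwsub hfw)
    have hUfe : U f ≤ U s(a, b) := hmax' f hfc
    have hfG : f ∈ G.edgeSet := (SimpleGraph.edgeSet_subset_edgeSet.mpr hle) (w.edges_subset_edgeSet hfw)
    have : f = s(a, b) := hU hfG heG (le_antisymm hUfe hUef)
    rw [this] at hfw
    exact hwe hfw
  exact ⟨hle, ⟨hconn, hac⟩⟩
end

section
/- Let G be a finite connected simple graph with edge set E and let U : E → ℝ be injective. Then for every spanning tree T of G, the sum of labels satisfies Σ_{e ∈ T_U} U(e) ≤ Σ_{e ∈ T} U(e); that is, T_U has minimal edge label sum among all spanning trees of G. -/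
open SimpleGraph

namespace MSTAux

variable {V : Type*}

/-- Chain reachability along a walk. -/
lemma chain_reach {G' K : SimpleGraph V} {x y : V} (w : G'.Walk x y)
    (h : ∀ g ∈ w.edges, ∀ c d : V, g = s(c, d) → K.Reachable c d) :
    K.Reachable x y := by
  induction w with
  | nil => exact Reachable.refl _
  | @cons u u' v hadj w' ih =>
    exact (h s(u, u') (by simp) u u' rfl).trans
      (ih fun g hg c d hcd => h g (by simp [hg]) c d hcd)

/-- A path minus one of its edges still links things up suitably. -/
lemma path_avoid {G : SimpleGraph V} {c d : V} {a b : V} (p : G.Walk a b)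
    (hp : p.IsPath) (hmem : s(c, d) ∈ p.edges) (K : SimpleGraph V)
    (hK : ∀ x y : V, s(x, y) ∈ p.edges → s(x, y) ≠ s(c, d) → K.Adj x y) :
    (K.Reachable a c ∧ K.Reachable d b) ∨ (K.Reachable a d ∧ K.Reachable c b) := by
  induction p with
  | nil => simp at hmem
  | @cons u u' v hadj w ih =>
    rw [Walk.cons_isPath_iff] at hp
    rw [Walk.edges_cons, List.mem_cons] at hmem
    have husup : s(u, u') ∉ w.edges := fun h =>
      hp.2 (w.fst_mem_support_of_mem_edges h)
    rcases hmem with heq | hmem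
    · -- s(c,d) = s(u,u')
      have hw : ∀ g ∈ w.edges, g ≠ s(c, d) := by
        intro g hg hgeq
        rw [hgeq, heq] at hg
        exact husup hg
      have hreach : K.Reachable u' v := by
        refine chain_reach w (fun g hg x y hgxy => ?_)
        exact (hK x y (by simp [hgxy ▸ hg]) (hgxy ▸ hw g hg)).reachable
      rw [Sym2.eq_iff] at heq
      rcases heq with ⟨rfl, rfl⟩ | ⟨rfl, rfl⟩
      · exact Or.inl ⟨Reachable.refl _, hreach⟩
      · exact Or.inr ⟨Reachable.refl _, hreach⟩
    · -- s(c,d) ∈ w.edges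
      have hne : s(u, u') ≠ s(c, d) := fun h => husup (h ▸ hmem)
      have hKadj : K.Adj u u' := hK u u' (by simp) hne
      rcases ih hp.1 hmem (fun x y hxy hne' => hK x y (by simp [hxy]) hne') with
        ⟨h1, h2⟩ | ⟨h1, h2⟩
      · exact Or.inl ⟨hKadj.reachable.trans h1, h2⟩
      · exact Or.inr ⟨hKadj.reachable.trans h1, h2⟩


/-- Endpoints of any edge of `G` are reachable in the MST. -/
lemma mst_reach [Fintype V] {G : SimpleGraph V} {U : Sym2 V → ℝ} :
    ∀ e ∈ G.edgeSet, ∀ a b : V, e = s(a, b) →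
      (fromEdgeSet (mstEdges G U)).Reachable a b := by
  classical
  have hfin : G.edgeSet.Finite := Set.toFinite _
  set m : Sym2 V → ℕ := fun e => (hfin.toFinset.filter (fun g => U g < U e)).card with hm
  suffices key : ∀ n : ℕ, ∀ e ∈ G.edgeSet, m e < n → ∀ a b : V, e = s(a, b) →
      (fromEdgeSet (mstEdges G U)).Reachable a b by
    intro e he a b hab
    exact key (m e + 1) e he (Nat.lt_succ_self _) a b hab
  intro n
  induction n with
  | zero => intro e _ h; omega
  | succ n ih =>
    intro e he hme a b hab
    by_cases heM : e ∈ mstEdges G U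
    · have : G.Adj a b := by rwa [hab, mem_edgeSet] at he
      exact ((fromEdgeSet_adj _).mpr ⟨hab ▸ heM, this.ne⟩).reachable
    · have hne : ¬ (∀ a b : V, e = s(a, b) →
          ∀ p : G.Walk a b, p.IsPath → ∃ f ∈ p.edges, U e ≤ U f) :=
        fun h => heM ⟨he, h⟩
      push_neg at hne
      obtain ⟨a', b', hab', p, hp, hsm⟩ := hne
      have hr : (fromEdgeSet (mstEdges G U)).Reachable a' b' := by
        refine chain_reach p (fun g hg c d hgcd => ?_)
        have hgE : g ∈ G.edgeSet := p.edges_subset_edgeSet hg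
        have hlt : U g < U e := hsm g hg
        have hmlt : m g < m e := by
          apply Finset.card_lt_card
          constructor
          · intro x hx
            simp only [Finset.mem_filter, Set.Finite.mem_toFinset] at hx ⊢
            exact ⟨hx.1, hx.2.trans hlt⟩
          · intro hsub
            have hgmem : g ∈ hfin.toFinset.filter (fun x => U x < U e) := by
              simp only [Finset.mem_filter, Set.Finite.mem_toFinset]
              exact ⟨hgE, hlt⟩
            have := hsub hgmem
            simp only [Finset.mem_filter] at this
            exact lt_irrefl _ this.2
        exact ih g hgE (by omega) c d hgcd
      rw [hab] at hab'
      rw [Sym2.eq_iff] at hab'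
      rcases hab' with ⟨rfl, rfl⟩ | ⟨rfl, rfl⟩
      · exact hr
      · exact hr.symm

lemma mst_connected [Fintype V] {G : SimpleGraph V} (hG : G.Connected) (U : Sym2 V → ℝ) :
    (fromEdgeSet (mstEdges G U)).Connected := by
  rw [connected_iff]
  refine ⟨fun x y => ?_, hG.nonempty⟩
  obtain ⟨w⟩ := hG.preconnected x y
  exact chain_reach w (fun g hg c d hgcd =>
    mst_reach g (w.edges_subset_edgeSet hg) c d hgcd)


lemma exists_big_edge {G : SimpleGraph V} {U : Sym2 V → ℝ} (hU : Set.InjOn U G.edgeSet)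
    {a b : V} (hab : s(a, b) ∈ G.edgeSet) (p : G.Walk a b) (hp : p.IsPath)
    (hep : s(a, b) ∉ p.edges) (hw : ∃ f ∈ p.edges, U s(a, b) ≤ U f) :
    ∃ f ∈ p.edges, f ∉ mstEdges G U ∧ U s(a, b) < U f := by
  classical
  obtain ⟨f₀, hf₀, hf₀le⟩ := hw
  obtain ⟨f, hfmem, hfmax⟩ := p.edges.toFinset.exists_max_image U
    ⟨f₀, List.mem_toFinset.mpr hf₀⟩
  rw [List.mem_toFinset] at hfmem
  have hfE : f ∈ G.edgeSet := p.edges_subset_edgeSet hfmem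
  have hmax : ∀ g ∈ p.edges, g ≠ f → U g < U f := by
    intro g hg hgne
    refine lt_of_le_of_ne (hfmax g (List.mem_toFinset.mpr hg)) (fun h => ?_)
    exact hgne (hU (p.edges_subset_edgeSet hg) hfE h)
  have hlt : U s(a, b) < U f := by
    refine lt_of_le_of_ne (hf₀le.trans (hfmax f₀ (List.mem_toFinset.mpr hf₀))) (fun h => ?_)
    exact hep ((hU hab hfE h) ▸ hfmem)
  refine ⟨f, hfmem, fun hfM => ?_, hlt⟩
  obtain ⟨c, d, hcd⟩ : ∃ c d : V, f = s(c, d) := f.inductionOn (fun x y => ⟨x, y, rfl⟩)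
  set S : Set (Sym2 V) := {g | g ∈ p.edges ∧ g ≠ f} ∪ {s(a, b)} with hS
  have hSE : S ⊆ G.edgeSet := by
    rintro g (⟨hg, -⟩ | hg)
    · exact p.edges_subset_edgeSet hg
    · exact hg ▸ hab
  have hKadj : ∀ x y : V, s(x, y) ∈ p.edges → s(x, y) ≠ f → (fromEdgeSet S).Adj x y := by
    intro x y hxy hne
    rw [fromEdgeSet_adj]
    exact ⟨Or.inl ⟨hxy, hne⟩, (G.mem_edgeSet.mp (p.edges_subset_edgeSet hxy)).ne⟩
  have hKab : (fromEdgeSet S).Adj a b :=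
    (fromEdgeSet_adj _).mpr ⟨Or.inr rfl, (G.mem_edgeSet.mp hab).ne⟩
  have hreach : (fromEdgeSet S).Reachable c d := by
    rcases path_avoid p hp (hcd ▸ hfmem) (fromEdgeSet S)
        (fun x y hxy hne => hKadj x y hxy (hcd ▸ hne)) with ⟨h1, h2⟩ | ⟨h1, h2⟩
    · exact h1.symm.trans (hKab.reachable.trans h2.symm)
    · exact h2.trans (hKab.reachable.symm.trans h1)
  obtain ⟨w0⟩ := hreach
  have hq0 := w0.toPath
  have hqE : ∀ g ∈ (w0.toPath : (fromEdgeSet S).Walk c d).edges, g ∈ G.edgeSet := by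
    intro g hg
    have : g ∈ (fromEdgeSet S).edgeSet :=
      Walk.edges_subset_edgeSet _ hg
    rw [edgeSet_fromEdgeSet] at this
    exact hSE this.1
  set q : G.Walk c d := (w0.toPath : (fromEdgeSet S).Walk c d).transfer G hqE with hq
  have hqP : q.IsPath := (w0.toPath.2).transfer hqE
  obtain ⟨g, hg, hge⟩ := hfM.2 c d hcd q hqP
  rw [hq, Walk.edges_transfer] at hg
  have hgS : g ∈ S := by
    have : g ∈ (fromEdgeSet S).edgeSet := Walk.edges_subset_edgeSet _ hg
    rw [edgeSet_fromEdgeSet] at this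
    exact this.1
  rcases hgS with ⟨hgp, hgne⟩ | hgab
  · exact absurd hge (not_le.mpr (hmax g hgp hgne))
  · rw [Set.mem_singleton_iff] at hgab
    rw [hgab] at hge
    exact absurd hge (not_le.mpr hlt)

lemma mst_acyclic {G : SimpleGraph V} {U : Sym2 V → ℝ} (hU : Set.InjOn U G.edgeSet) :
    (fromEdgeSet (mstEdges G U)).IsAcyclic := by
  classical
  rw [isAcyclic_iff_forall_adj_isBridge]
  intro v w hadj
  rw [isBridge_iff_adj_and_forall_walk_mem_edges]
  refine fun ω => ?_
  by_contra hne
  have hvwM : s(v, w) ∈ mstEdges G U := ((fromEdgeSet_adj _).mp hadj).1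
  have hnp : s(v, w) ∉ (ω.toPath : (fromEdgeSet (mstEdges G U)).Walk v w).edges :=
    fun h => hne (ω.edges_toPath_subset h)
  have hT : ∀ g ∈ (ω.toPath : (fromEdgeSet (mstEdges G U)).Walk v w).edges,
      g ∈ G.edgeSet := by
    intro g hg
    have : g ∈ (fromEdgeSet (mstEdges G U)).edgeSet := Walk.edges_subset_edgeSet _ hg
    rw [edgeSet_fromEdgeSet] at this
    exact this.1.1
  set p : G.Walk v w := (ω.toPath : (fromEdgeSet (mstEdges G U)).Walk v w).transfer G hT
    with hpdef
  have hpP : p.IsPath := (ω.toPath.2).transfer hT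
  have hpe : p.edges = (ω.toPath : (fromEdgeSet (mstEdges G U)).Walk v w).edges :=
    Walk.edges_transfer _ hT
  obtain ⟨f', hf', hle⟩ := hvwM.2 v w rfl p hpP
  obtain ⟨f, hf, hfnM, -⟩ := exists_big_edge hU hvwM.1 p hpP (by rw [hpe]; exact hnp)
    ⟨f', hf', hle⟩
  apply hfnM
  rw [hpe] at hf
  have : f ∈ (fromEdgeSet (mstEdges G U)).edgeSet := Walk.edges_subset_edgeSet _ hf
  rw [edgeSet_fromEdgeSet] at this
  exact this.1

/-- A connected spanning subgraph of the MST is the MST. -/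
lemma sub_mst_eq {G : SimpleGraph V} {U : Sym2 V → ℝ} (hU : Set.InjOn U G.edgeSet)
    {S : Set (Sym2 V)} (hconn : (fromEdgeSet S).Connected) (hSM : S ⊆ mstEdges G U) :
    S = mstEdges G U := by
  refine Set.Subset.antisymm hSM (fun g hg => ?_)
  by_contra hgS
  obtain ⟨x, y, hxy⟩ : ∃ x y : V, g = s(x, y) := g.inductionOn (fun x y => ⟨x, y, rfl⟩)
  have hxyne : x ≠ y := (G.mem_edgeSet.mp (hxy ▸ hg.1)).ne
  have hadj : (fromEdgeSet (mstEdges G U)).Adj x y :=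
    (fromEdgeSet_adj _).mpr ⟨hxy ▸ hg, hxyne⟩
  have hbridge := (isAcyclic_iff_forall_adj_isBridge.mp (mst_acyclic hU)) hadj
  rw [isBridge_iff_adj_and_forall_walk_mem_edges] at hbridge
  obtain ⟨w⟩ := hconn.preconnected x y
  have hwS : ∀ e ∈ w.edges, e ∈ S := by
    intro e he
    have : e ∈ (fromEdgeSet S).edgeSet := Walk.edges_subset_edgeSet _ he
    rw [edgeSet_fromEdgeSet] at this
    exact this.1
  have hT : ∀ e ∈ w.edges, e ∈ (fromEdgeSet (mstEdges G U)).edgeSet := by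
    intro e he
    have h1 : e ∈ (fromEdgeSet S).edgeSet := Walk.edges_subset_edgeSet _ he
    rw [edgeSet_fromEdgeSet] at h1 ⊢
    exact ⟨hSM h1.1, h1.2⟩
  have hmem := hbridge (w.transfer _ hT)
  rw [Walk.edges_transfer] at hmem
  exact hgS (hxy ▸ hwS _ hmem)

lemma card_tree [Fintype V] {G : SimpleGraph V} {S : Set (Sym2 V)} (hS : S ⊆ G.edgeSet)
    (hTree : (fromEdgeSet S).IsTree) :
    S.toFinite.toFinset.card + 1 = Fintype.card V := by
  classical
  have hedge : (fromEdgeSet S).edgeSet = S := by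
    rw [edgeSet_fromEdgeSet]
    ext g
    simp only [Set.mem_diff, Set.mem_setOf_eq, and_iff_left_iff_imp]
    exact fun hgS => G.not_isDiag_of_mem_edgeSet (hS hgS)
  haveI : Fintype (fromEdgeSet S).edgeSet := Set.Finite.fintype (Set.toFinite _)
  have h1 := hTree.card_edgeFinset
  have h2 : (fromEdgeSet S).edgeFinset.card = (fromEdgeSet S).edgeSet.ncard := by
    rw [Set.ncard_eq_toFinset_card']
    exact congrArg Finset.card (Set.toFinset_congr rfl)
  have h3 : S.toFinite.toFinset.card = S.ncard :=
    (Set.ncard_eq_toFinset_card S S.toFinite).symm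
  rw [h2, hedge, ← h3] at h1
  exact h1


lemma key_sum [Fintype V] [DecidableEq (Sym2 V)] {G : SimpleGraph V} (hG : G.Connected) {U : Sym2 V → ℝ}
    (hU : Set.InjOn U G.edgeSet) :
    ∀ n : ℕ, ∀ S : Set (Sym2 V), S ⊆ G.edgeSet → (fromEdgeSet S).Connected →
      S.toFinite.toFinset.card ≤ (mstEdges G U).toFinite.toFinset.card →
      (S.toFinite.toFinset \ (mstEdges G U).toFinite.toFinset).card ≤ n →
      ∑ e ∈ (mstEdges G U).toFinite.toFinset, U e ≤ ∑ e ∈ S.toFinite.toFinset, U e := by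
  classical
  intro n
  induction n with
  | zero =>
    intro S hSsub hconn hcard hdiff
    have hsub : S ⊆ mstEdges G U := by
      intro g hg
      by_contra hgM
      have : g ∈ S.toFinite.toFinset \ (mstEdges G U).toFinite.toFinset := by
        simp only [Finset.mem_sdiff, Set.Finite.mem_toFinset]
        exact ⟨hg, hgM⟩
      have := Finset.card_pos.mpr ⟨g, this⟩
      omega
    have hSeq : S.toFinite.toFinset = (mstEdges G U).toFinite.toFinset := by
      ext g; simp [Set.Finite.mem_toFinset, sub_mst_eq hU hconn hsub]
    rw [hSeq]
  | succ n ih =>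
    intro S hSsub hconn hcard hdiff
    by_cases hsub : S ⊆ mstEdges G U
    · have hSeq : S.toFinite.toFinset = (mstEdges G U).toFinite.toFinset := by
        ext g; simp [Set.Finite.mem_toFinset, sub_mst_eq hU hconn hsub]
      rw [hSeq]
    · -- pick e ∈ M \ S
      obtain ⟨e, heM, heS⟩ : ∃ e, e ∈ mstEdges G U ∧ e ∉ S := by
        by_contra h
        push_neg at h
        have hMS : (mstEdges G U).toFinite.toFinset ⊆ S.toFinite.toFinset := by
          intro g hg
          rw [Set.Finite.mem_toFinset] at hg ⊢
          exact h g hg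
        have := Finset.eq_of_subset_of_card_le hMS hcard
        apply hsub
        intro g hg
        have : g ∈ (mstEdges G U).toFinite.toFinset := by
          rw [this, Set.Finite.mem_toFinset]; exact hg
        rwa [Set.Finite.mem_toFinset] at this
      obtain ⟨a, b, hab⟩ : ∃ x y : V, e = s(x, y) := e.inductionOn (fun x y => ⟨x, y, rfl⟩)
      have habE : s(a, b) ∈ G.edgeSet := hab ▸ heM.1
      have habne : a ≠ b := (G.mem_edgeSet.mp habE).ne
      obtain ⟨w0⟩ := hconn.preconnected a b
      have hqE : ∀ g ∈ (w0.toPath : (fromEdgeSet S).Walk a b).edges, g ∈ G.edgeSet := by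
        intro g hg
        have : g ∈ (fromEdgeSet S).edgeSet := Walk.edges_subset_edgeSet _ hg
        rw [edgeSet_fromEdgeSet] at this
        exact hSsub this.1
      set p : G.Walk a b := (w0.toPath : (fromEdgeSet S).Walk a b).transfer G hqE with hpdef
      have hpP : p.IsPath := (w0.toPath.2).transfer hqE
      have hpS : ∀ g ∈ p.edges, g ∈ S := by
        intro g hg
        rw [hpdef, Walk.edges_transfer] at hg
        have : g ∈ (fromEdgeSet S).edgeSet := Walk.edges_subset_edgeSet _ hg
        rw [edgeSet_fromEdgeSet] at this
        exact this.1
      have hep : s(a, b) ∉ p.edges := fun h => heS (hab ▸ hpS _ h)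
      obtain ⟨f', hf', hle'⟩ := heM.2 a b hab p hpP
      rw [hab] at hle'
      obtain ⟨f, hfp, hfM, hflt⟩ := exists_big_edge hU habE p hpP hep ⟨f', hf', hle'⟩
      have hfS : f ∈ S := hpS f hfp
      have hfe : f ≠ e := fun h => heS (h ▸ hfS)
      obtain ⟨c, d, hcd⟩ : ∃ x y : V, f = s(x, y) := f.inductionOn (fun x y => ⟨x, y, rfl⟩)
      set S' : Set (Sym2 V) := insert e (S \ {f}) with hS'
      have hS'sub : S' ⊆ G.edgeSet := by
        rintro g (rfl | ⟨hg, -⟩)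
        · exact heM.1
        · exact hSsub hg
      have hS'adj : ∀ x y : V, s(x, y) ∈ p.edges → s(x, y) ≠ f → (fromEdgeSet S').Adj x y := by
        intro x y hxy hne
        rw [fromEdgeSet_adj]
        exact ⟨Or.inr ⟨hpS _ hxy, hne⟩, (G.mem_edgeSet.mp (p.edges_subset_edgeSet hxy)).ne⟩
      have hS'ab : (fromEdgeSet S').Adj a b :=
        (fromEdgeSet_adj _).mpr ⟨Or.inl hab.symm, habne⟩
      have hreach_cd : (fromEdgeSet S').Reachable c d := by
        rcases path_avoid p hpP (hcd ▸ hfp) (fromEdgeSet S')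
            (fun x y hxy hne => hS'adj x y hxy (hcd ▸ hne)) with ⟨h1, h2⟩ | ⟨h1, h2⟩
        · exact h1.symm.trans (hS'ab.reachable.trans h2.symm)
        · exact h2.trans (hS'ab.reachable.symm.trans h1)
      have hconn' : (fromEdgeSet S').Connected := by
        rw [connected_iff]
        refine ⟨fun x y => ?_, hG.nonempty⟩
        obtain ⟨w⟩ := hconn.preconnected x y
        refine chain_reach w (fun g hg c' d' hgcd => ?_)
        have hgS : g ∈ S := by
          have : g ∈ (fromEdgeSet S).edgeSet := Walk.edges_subset_edgeSet _ hg
          rw [edgeSet_fromEdgeSet] at this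
          exact this.1
        by_cases hgf : g = f
        · rw [hgf, hcd] at hgcd
          rw [Sym2.eq_iff] at hgcd
          rcases hgcd with ⟨rfl, rfl⟩ | ⟨rfl, rfl⟩
          · exact hreach_cd
          · exact hreach_cd.symm
        · refine Adj.reachable ?_
          rw [hgcd] at hgS hgf
          exact (fromEdgeSet_adj _).mpr ⟨Or.inr ⟨hgS, hgf⟩,
            (G.mem_edgeSet.mp (hSsub hgS)).ne⟩
      -- Finset bookkeeping
      have hF' : S'.toFinite.toFinset = insert e (S.toFinite.toFinset.erase f) := by
        ext g
        simp only [Set.Finite.mem_toFinset, hS', Set.mem_insert_iff, Set.mem_diff,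
          Set.mem_singleton_iff, Finset.mem_insert, Finset.mem_erase,
          Set.Finite.mem_toFinset]
        tauto
      have heF : e ∉ S.toFinite.toFinset.erase f := by
        simp only [Finset.mem_erase, Set.Finite.mem_toFinset]
        tauto
      have hfF : f ∈ S.toFinite.toFinset := by rwa [Set.Finite.mem_toFinset]
      have hScard : 1 ≤ S.toFinite.toFinset.card := Finset.card_pos.mpr ⟨f, hfF⟩
      have hcard' : S'.toFinite.toFinset.card = S.toFinite.toFinset.card := by
        rw [hF', Finset.card_insert_of_notMem heF, Finset.card_erase_of_mem hfF]
        omega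
      have hfdiff : f ∈ S.toFinite.toFinset \ (mstEdges G U).toFinite.toFinset := by
        simp only [Finset.mem_sdiff, Set.Finite.mem_toFinset]
        exact ⟨hfS, hfM⟩
      have hdiff' : (S'.toFinite.toFinset \ (mstEdges G U).toFinite.toFinset).card ≤ n := by
        have hsubd : S'.toFinite.toFinset \ (mstEdges G U).toFinite.toFinset ⊆
            (S.toFinite.toFinset \ (mstEdges G U).toFinite.toFinset).erase f := by
          intro g hg
          rw [Finset.mem_sdiff, hF'] at hg
          obtain ⟨hg1, hg2⟩ := hg
          rw [Finset.mem_insert, Finset.mem_erase] at hg1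
          rcases hg1 with rfl | ⟨hgf, hgF⟩
          · exact absurd (Set.Finite.mem_toFinset _ |>.mpr heM) hg2
          · rw [Finset.mem_erase, Finset.mem_sdiff]
            exact ⟨hgf, hgF, hg2⟩
        calc (S'.toFinite.toFinset \ (mstEdges G U).toFinite.toFinset).card
            ≤ ((S.toFinite.toFinset \ (mstEdges G U).toFinite.toFinset).erase f).card :=
              Finset.card_le_card hsubd
          _ = (S.toFinite.toFinset \ (mstEdges G U).toFinite.toFinset).card - 1 :=
              Finset.card_erase_of_mem hfdiff
          _ ≤ n := by
              have := Finset.card_pos.mpr ⟨f, hfdiff⟩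
              omega
      have hIH := ih S' hS'sub hconn' (by omega) hdiff'
      have hsum' : ∑ g ∈ S'.toFinite.toFinset, U g
          = U e + (∑ g ∈ S.toFinite.toFinset, U g - U f) := by
        rw [hF', Finset.sum_insert heF]
        have := Finset.sum_erase_add S.toFinite.toFinset U hfF
        linarith
      rw [hsum'] at hIH
      rw [← hab] at hflt
      linarith


end MSTAux

/-- `T_U` has minimal edge label sum among all spanning trees of `G`. -/
theorem stmt1 {V : Type*} [Fintype V] (G : SimpleGraph V) (hG : G.Connected)
    (U : Sym2 V → ℝ) (hU : Set.InjOn U G.edgeSet)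
    (T : Set (Sym2 V)) (hTsub : T ⊆ G.edgeSet)
    (hT : (SimpleGraph.fromEdgeSet T).IsTree) :
    ∑ e ∈ (mstEdges G U).toFinite.toFinset, U e ≤ ∑ e ∈ T.toFinite.toFinset, U e := by
  classical
  have hMsub : mstEdges G U ⊆ G.edgeSet := fun e he => he.1
  have hMtree : (fromEdgeSet (mstEdges G U)).IsTree :=
    ⟨MSTAux.mst_connected hG U, MSTAux.mst_acyclic hU⟩
  have hM := MSTAux.card_tree hMsub hMtree
  have hT' := MSTAux.card_tree hTsub hT
  exact MSTAux.key_sum hG hU _ T hTsub hT.isConnected (by omega) le_rfl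
end

section
/- Let G be an infinite, locally finite, connected simple graph and U : E → ℝ injective. For every finite nonempty set of vertices W with W ≠ V, the edge of the cut ∂_E W with minimal label belongs both to the free minimal spanning forest F_f(U) and to the wired minimal spanning forest F_w(U). -/
/-!
Every path between the endpoints of a cut edge of `∂_E W` crosses that cut, and so does any
infinite simple path starting in the finite set `W`, since it must eventually leave `W`. Of the
two disjoint rays in an extended path, one starts at the endpoint in `W`. Each extended path
joining the endpoints of the least cut edge therefore contains a cut edge, whose label is at
least as large.
-/

open SimpleGraph

section

variable {V : Type*} {G : SimpleGraph V} {W : Set V}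

theorem SimpleGraph.Walk.exists_mem_edges_cutEdges {a b : V} (p : G.Walk a b) (ha : a ∈ W)
    (hb : b ∉ W) : ∃ f ∈ p.edges, f ∈ cutEdges G W := by
  induction p with
  | nil => exact absurd ha hb
  | @cons a c b hac p ih =>
    by_cases hc : c ∈ W
    · obtain ⟨f, hf, hfW⟩ := ih hc hb
      exact ⟨f, List.mem_cons_of_mem _ hf, hfW⟩
    · exact ⟨s(a, c), List.mem_cons_self .., G.mem_edgeSet.mpr hac, a, c, rfl, ha, hc⟩

theorem IsRay.exists_mem_rayEdges_cutEdges {r : ℕ → V} (hr : IsRay G r) (hW : W.Finite)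
    (h0 : r 0 ∈ W) : ∃ f ∈ rayEdges r, f ∈ cutEdges G W := by
  obtain ⟨n, hn, hn'⟩ := Nat.exists_not_and_succ_of_not_zero_of_exists (p := fun n => r n ∉ W)
    (not_not.mpr h0) (hW.preimage hr.1.injOn).exists_notMem
  exact ⟨_, ⟨n, rfl⟩, G.mem_edgeSet.mpr (hr.2 n), r n, r (n + 1), rfl, not_not.mp hn, hn'⟩

theorem endpoints_of_mem_cutEdges {e : Sym2 V} (he : e ∈ cutEdges G W) {a b : V}
    (hab : e = s(a, b)) : a ∈ W ∧ b ∉ W ∨ b ∈ W ∧ a ∉ W := by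
  obtain ⟨-, a₀, b₀, rfl, ha₀, hb₀⟩ := he
  rcases Sym2.eq_iff.mp hab with ⟨rfl, rfl⟩ | ⟨rfl, rfl⟩
  · exact .inl ⟨ha₀, hb₀⟩
  · exact .inr ⟨ha₀, hb₀⟩

theorem SimpleGraph.Walk.exists_mem_edges_cutEdges_of_mem_cutEdges {e : Sym2 V}
    (he : e ∈ cutEdges G W) {a b : V} (hab : e = s(a, b)) (p : G.Walk a b) :
    ∃ f ∈ p.edges, f ∈ cutEdges G W := by
  rcases endpoints_of_mem_cutEdges he hab with ⟨ha, hb⟩ | ⟨hb, ha⟩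
  · exact p.exists_mem_edges_cutEdges ha hb
  · obtain ⟨f, hf, hfW⟩ := p.reverse.exists_mem_edges_cutEdges hb ha
    exact ⟨f, List.mem_reverse.mp (p.edges_reverse ▸ hf), hfW⟩

theorem exists_mem_rayEdges_cutEdges_of_mem_cutEdges (hW : W.Finite) {e : Sym2 V}
    (he : e ∈ cutEdges G W) {a b : V} (hab : e = s(a, b)) {r₁ r₂ : ℕ → V}
    (hr₁ : IsRay G r₁) (hr₂ : IsRay G r₂) (h₁ : r₁ 0 = a) (h₂ : r₂ 0 = b) :
    ∃ f ∈ rayEdges r₁ ∪ rayEdges r₂, f ∈ cutEdges G W := by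
  rcases endpoints_of_mem_cutEdges he hab with ⟨ha, -⟩ | ⟨hb, -⟩
  · obtain ⟨f, hf, hfW⟩ := hr₁.exists_mem_rayEdges_cutEdges hW (h₁ ▸ ha)
    exact ⟨f, .inl hf, hfW⟩
  · obtain ⟨f, hf, hfW⟩ := hr₂.exists_mem_rayEdges_cutEdges hW (h₂ ▸ hb)
    exact ⟨f, .inr hf, hfW⟩

end

theorem stmt2_general {V : Type*} (G : SimpleGraph V)
    (U : Sym2 V → ℝ)
    (W : Set V) (hWfin : W.Finite)
    (e : Sym2 V) (he : e ∈ cutEdges G W) (hmin : ∀ f ∈ cutEdges G W, U e ≤ U f) :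
    e ∈ mstEdges G U ∧ e ∈ wmsfEdges G U := by
  have hpath :
      ∀ a b, e = s(a, b) → ∀ p : G.Walk a b, p.IsPath → ∃ f ∈ p.edges, U e ≤ U f :=
    fun a b hab p _ => by
      obtain ⟨f, hf, hfW⟩ := p.exists_mem_edges_cutEdges_of_mem_cutEdges he hab
      exact ⟨f, hf, hmin f hfW⟩
  refine ⟨⟨he.1, hpath⟩, he.1, fun a b hab => ⟨hpath a b hab, ?_⟩⟩
  intro r₁ r₂ hr₁ hr₂ h₁ h₂ _
  obtain ⟨f, hf, hfW⟩ :=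
    exists_mem_rayEdges_cutEdges_of_mem_cutEdges hWfin he hab hr₁ hr₂ h₁ h₂
  exact ⟨f, hf, hmin f hfW⟩

/-- In an infinite, locally finite, connected graph with injective edge
labels, the least edge of any cut determined by a finite nonempty proper vertex set
belongs to both the free and the wired minimal spanning forest. -/
theorem stmt2 {V : Type*} [Infinite V] (G : SimpleGraph V)
    (hlf : ∀ v : V, (G.neighborSet v).Finite) (hG : G.Connected)
    (U : Sym2 V → ℝ) (hU : Set.InjOn U G.edgeSet)
    (W : Set V) (hWfin : W.Finite) (hWne : W.Nonempty) (hWV : W ≠ Set.univ)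
    (e : Sym2 V) (he : e ∈ cutEdges G W) (hmin : ∀ f ∈ cutEdges G W, U e ≤ U f) :
    e ∈ mstEdges G U ∧ e ∈ wmsfEdges G U :=
  stmt2_general G U W hWfin e he hmin
end

section
/- Let G be an infinite, locally finite, connected simple graph and U : E → ℝ injective. Then every connected component of the spanning subgraph (V, F_w(U)) is infinite, and likewise every connected component of (V, F_f(U)) is infinite. -/
open SimpleGraph

/-- Any walk from inside `W` to outside `W` crosses the cut of `W`. -/
lemma walk_cross {V : Type*} {G : SimpleGraph V} {W : Set V} :
    ∀ {a b : V} (p : G.Walk a b), a ∈ W → b ∉ W → ∃ f ∈ p.edges, f ∈ cutEdges G W := by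
  intro a b p
  induction p with
  | nil => intro ha hb; exact absurd ha hb
  | @cons a c b h q ih =>
    intro ha hb
    by_cases hc : c ∈ W
    · obtain ⟨f, hf, hfc⟩ := ih hc hb
      exact ⟨f, List.mem_cons_of_mem _ hf, hfc⟩
    · exact ⟨s(a, c), List.mem_cons_self, ⟨h, a, c, rfl, ha, hc⟩⟩

/-- In a locally finite graph, the cut of a finite set is finite. -/
lemma cut_finite {V : Type*} {G : SimpleGraph V} (hlf : ∀ v, (G.neighborSet v).Finite)
    {W : Set V} (hW : W.Finite) : (cutEdges G W).Finite := by
  refine Set.Finite.subset (hW.biUnion (fun a _ => (hlf a).image (fun b => s(a, b)))) ?_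
  rintro e ⟨he, a, b, rfl, ha, hb⟩
  rw [SimpleGraph.mem_edgeSet] at he
  exact Set.mem_biUnion ha ⟨b, he, rfl⟩

/-- A ray starting in a finite set `W` must cross the boundary of `W`. -/
lemma ray_leaves {V : Type*} {W : Set V} (hW : W.Finite) {r : ℕ → V}
    (hr : Function.Injective r) (h0 : r 0 ∈ W) :
    ∃ n, r n ∈ W ∧ r (n + 1) ∉ W := by
  have hex : ∃ n, r n ∉ W := by
    by_contra hcon
    push_neg at hcon
    exact (Set.infinite_range_of_injective hr) (hW.subset (Set.range_subset_iff.2 hcon))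
  classical
  have hfind := Nat.find_spec hex
  have hne : Nat.find hex ≠ 0 := by
    intro h; rw [h] at hfind; exact hfind h0
  obtain ⟨k, hk⟩ := Nat.exists_eq_succ_of_ne_zero hne
  refine ⟨k, ?_, by rw [show k + 1 = Nat.find hex from by omega]; exact hfind⟩
  by_contra hkW
  exact Nat.find_min hex (by omega) hkW

/-- The key lemma: for any finite nonempty vertex set `W`, there is an edge of the
wired minimal spanning forest crossing the cut of `W` (namely, the one of minimum
label among the cut edges). -/
lemma min_cut_mem_wmsf {V : Type*} [Infinite V] {G : SimpleGraph V}
    (hlf : ∀ v : V, (G.neighborSet v).Finite) (hG : G.Connected)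
    (U : Sym2 V → ℝ) {W : Set V} (hW : W.Finite) (hne : W.Nonempty) :
    ∃ a b : V, a ∈ W ∧ b ∉ W ∧ s(a, b) ∈ wmsfEdges G U := by
  obtain ⟨v, hv⟩ := hne
  have hcut_ne : (cutEdges G W).Nonempty := by
    obtain ⟨w, hw⟩ := hW.infinite_compl.nonempty
    obtain ⟨p⟩ := hG.preconnected v w
    obtain ⟨f, _, hf⟩ := walk_cross p hv hw
    exact ⟨f, hf⟩
  obtain ⟨e, heC, hemin⟩ := Set.exists_min_image _ U (cut_finite hlf hW) hcut_ne
  obtain ⟨heE, a₀, b₀, he, ha₀, hb₀⟩ := heC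
  subst he
  refine ⟨a₀, b₀, ha₀, hb₀, heE, ?_⟩
  intro a b hab
  rw [Sym2.eq_iff] at hab
  rcases hab with ⟨ha, hb⟩ | ⟨ha, hb⟩
  · subst ha; subst hb
    constructor
    · intro p _
      obtain ⟨f, hfp, hfc⟩ := walk_cross p ha₀ hb₀
      exact ⟨f, hfp, hemin f hfc⟩
    · intro r₁ r₂ hr₁ _ h10 _ _
      obtain ⟨n, hn, hn1⟩ := ray_leaves hW hr₁.1 (h10.symm ▸ ha₀)
      exact ⟨s(r₁ n, r₁ (n + 1)), Set.mem_union_left _ ⟨n, rfl⟩,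
        hemin _ ⟨G.mem_edgeSet.2 (hr₁.2 n), r₁ n, r₁ (n + 1), rfl, hn, hn1⟩⟩
  · subst ha; subst hb
    constructor
    · intro p _
      obtain ⟨f, hfp, hfc⟩ := walk_cross p.reverse ha₀ hb₀
      rw [SimpleGraph.Walk.edges_reverse] at hfp
      exact ⟨f, List.mem_reverse.1 hfp, hemin f hfc⟩
    · intro r₁ r₂ _ hr₂ _ h20 _
      obtain ⟨n, hn, hn1⟩ := ray_leaves hW hr₂.1 (h20.symm ▸ ha₀)
      exact ⟨s(r₂ n, r₂ (n + 1)), Set.mem_union_right _ ⟨n, rfl⟩,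
        hemin _ ⟨G.mem_edgeSet.2 (hr₂.2 n), r₂ n, r₂ (n + 1), rfl, hn, hn1⟩⟩

/-- Every edge of the wired MSF is an edge of the free MSF. -/
lemma wmsf_subset_mst {V : Type*} {G : SimpleGraph V} (U : Sym2 V → ℝ) :
    wmsfEdges G U ⊆ mstEdges G U := by
  rintro e ⟨he, h⟩
  exact ⟨he, fun a b hab p hp => (h a b hab).1 p hp⟩

/-- If an edge set contains, for every finite nonempty `W`, an edge crossing the cut
of `W`, then all components of the graph it spans are infinite. -/
lemma comp_infinite {V : Type*} (S : Set (Sym2 V))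
    (hkey : ∀ W : Set V, W.Finite → W.Nonempty → ∃ a b : V, a ∈ W ∧ b ∉ W ∧ s(a, b) ∈ S)
    (v : V) : {w : V | (SimpleGraph.fromEdgeSet S).Reachable v w}.Infinite := by
  by_contra hfin
  rw [Set.not_infinite] at hfin
  obtain ⟨a, b, ha, hb, hS⟩ := hkey _ hfin ⟨v, SimpleGraph.Reachable.refl v⟩
  have hadj : (SimpleGraph.fromEdgeSet S).Adj a b :=
    (SimpleGraph.fromEdgeSet_adj _).2 ⟨hS, fun h => hb (h ▸ ha)⟩
  exact hb (ha.trans hadj.reachable)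

/-- In an infinite, locally finite, connected graph with injective edge
labels, every connected component of the wired minimal spanning forest, and of the
free minimal spanning forest, is infinite. -/
theorem stmt3 {V : Type*} [Infinite V] (G : SimpleGraph V)
    (hlf : ∀ v : V, (G.neighborSet v).Finite) (hG : G.Connected)
    (U : Sym2 V → ℝ) (hU : Set.InjOn U G.edgeSet) :
    (∀ v : V, {w : V | (SimpleGraph.fromEdgeSet (wmsfEdges G U)).Reachable v w}.Infinite) ∧
    (∀ v : V, {w : V | (SimpleGraph.fromEdgeSet (mstEdges G U)).Reachable v w}.Infinite) := by
  have hkey : ∀ W : Set V, W.Finite → W.Nonempty →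
      ∃ a b : V, a ∈ W ∧ b ∉ W ∧ s(a, b) ∈ wmsfEdges G U :=
    fun W hW hne => min_cut_mem_wmsf hlf hG U hW hne
  refine ⟨comp_infinite _ hkey, comp_infinite _ ?_⟩
  intro W hW hne
  obtain ⟨a, b, ha, hb, hS⟩ := hkey W hW hne
  exact ⟨a, b, ha, hb, wmsf_subset_mst U hS⟩
end

section
/- Let H be a connected subgraph of the finite connected simple graph G, and let (U(e))_{e ∈ E(G)} be i.i.d. uniform [0,1] random variables. Then the minimal spanning tree of H (using the labels U restricted to E(H)) contains T_{U,G} ∩ E(H), where T_{U,G} is the minimal spanning tree of G; consequently, for every upward-closed family A ⊆ 2^{E(H)}, P[T_{U↾E(H), H} ∈ A] ≥ P[T_{U,G} ∩ E(H) ∈ A], i.e., the minimal spanning tree measure of H stochastically dominates the restriction to E(H) of the minimal spanning tree measure of G. -/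
open SimpleGraph

/-- The minimal spanning tree of a subgraph `H` of `G`, with the labels `U`
restricted to the edges of `H`: those edges of `H` whose endpoints cannot be
joined by a path in `H` all of whose edges have strictly smaller label. -/
def mstSubEdges {V : Type*} (G : SimpleGraph V) (H : G.Subgraph) (U : Sym2 V → ℝ) :
    Set (Sym2 V) :=
  {e | e ∈ H.edgeSet ∧ ∀ a b : H.verts, e = s((a : V), (b : V)) →
    ∀ p : H.coe.Walk a b, p.IsPath →
      ∃ f ∈ p.edges, U e ≤ U (Sym2.map Subtype.val f)}

open MeasureTheory in
/-- Let `H` be a connected subgraph of the finite connected graph `G`,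
with i.i.d. uniform `[0,1]` labels on the edges.  Deterministically (for injective
labels), the minimal spanning tree of `H` contains `T_{U,G} ∩ E(H)`; consequently,
for every upward-closed family `A` of subsets of `E(H)`, the minimal spanning tree
measure of `H` stochastically dominates the restriction to `E(H)` of the minimal
spanning tree measure of `G`. -/
theorem stmt4 {V : Type*} [Fintype V] [DecidableEq V] (G : SimpleGraph V)
    (hG : G.Connected) (H : G.Subgraph) (hH : H.Connected) :
    (∀ U : Sym2 V → ℝ, Set.InjOn U G.edgeSet →
      mstEdges G U ∩ H.edgeSet ⊆ mstSubEdges G H U) ∧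
    (∀ A : Set (Set (Sym2 V)),
      (∀ F F' : Set (Sym2 V), F ∈ A → F ⊆ F' → F' ⊆ H.edgeSet → F' ∈ A) →
      Measure.pi (fun _ : Sym2 V => volume.restrict (Set.Icc (0 : ℝ) 1))
          {U : Sym2 V → ℝ | mstEdges G U ∩ H.edgeSet ∈ A} ≤
        Measure.pi (fun _ : Sym2 V => volume.restrict (Set.Icc (0 : ℝ) 1))
          {U : Sym2 V → ℝ | mstSubEdges G H U ∈ A}) := by
  have key : ∀ U : Sym2 V → ℝ, mstEdges G U ∩ H.edgeSet ⊆ mstSubEdges G H U := by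
    rintro U e ⟨⟨heG, hmin⟩, heH⟩
    refine ⟨heH, ?_⟩
    intro a b hab p hp
    have hinj : Function.Injective H.hom := Subtype.val_injective
    have hpath : (p.map H.hom).IsPath := SimpleGraph.Walk.map_isPath_of_injective hinj hp
    obtain ⟨f', hf'mem, hf'⟩ := hmin a.val b.val hab (p.map H.hom) hpath
    replace hf'mem : f' ∈ p.edges.map (Sym2.map H.hom) :=
      Eq.mp (congrArg (f' ∈ ·) (SimpleGraph.Walk.edges_map H.hom p)) hf'mem
    obtain ⟨f, hf, rfl⟩ := List.mem_map.mp hf'mem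
    exact ⟨f, hf, hf'⟩
  refine ⟨fun U _ => key U, fun A hA => ?_⟩
  exact measure_mono fun U hU => hA _ _ hU (key U) (fun f hf => hf.1)
end

section
/- Let G be an infinite, locally finite, connected simple graph, U : E → ℝ injective, and let (G_n) be an increasing sequence of finite, nonempty, connected induced subgraphs of G with ⋃_n G_n = G. Then for every edge e ∈ E: if e ∈ F_f(U) then e belongs to the minimal spanning tree T_{G_n}(U) for every sufficiently large n, and if e ∉ F_f(U) then e ∉ T_{G_n}(U) for every sufficiently large n. In other words, F_f(U) = lim_{n→∞} T_{G_n}(U) edgewise. -/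
open SimpleGraph

/-- The subgraph of `G` induced on the vertex set `S` (as a graph on the same
vertex type, with all vertices outside `S` isolated): its edge set is
`(S × S) ∩ E(G)`. -/
def restrictG {V : Type*} (G : SimpleGraph V) (S : Set V) : SimpleGraph V where
  Adj a b := G.Adj a b ∧ a ∈ S ∧ b ∈ S
  symm := ⟨fun a b h => ⟨h.1.symm, h.2.2, h.2.1⟩⟩
  loopless := ⟨fun a h => G.loopless.irrefl a h.1⟩

/-- For an exhaustion of `G` by finite nonempty connected induced
subgraphs `G_n`, the free minimal spanning forest is the edgewise limit of the
minimal spanning trees of the `G_n`. -/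
theorem stmt5 {V : Type*} [Infinite V] (G : SimpleGraph V)
    (hlf : ∀ v : V, (G.neighborSet v).Finite) (hG : G.Connected)
    (U : Sym2 V → ℝ) (hU : Set.InjOn U G.edgeSet)
    (Vn : ℕ → Set V) (hmono : Monotone Vn)
    (hfin : ∀ n, (Vn n).Finite) (hne : ∀ n, (Vn n).Nonempty)
    (hconn : ∀ n, ∀ a ∈ Vn n, ∀ b ∈ Vn n, (restrictG G (Vn n)).Reachable a b)
    (hunion : ⋃ n, Vn n = Set.univ) :
    ∀ e ∈ G.edgeSet,
      (e ∈ mstEdges G U → ∃ N, ∀ n ≥ N, e ∈ mstEdges (restrictG G (Vn n)) U) ∧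
      (e ∉ mstEdges G U → ∃ N, ∀ n ≥ N, e ∉ mstEdges (restrictG G (Vn n)) U) := by
  have hmem : ∀ v : V, ∃ n, v ∈ Vn n := by
    intro v
    have : v ∈ ⋃ n, Vn n := by rw [hunion]; trivial
    exact Set.mem_iUnion.mp this
  have hlist : ∀ l : List V, ∃ N, ∀ v ∈ l, v ∈ Vn N := by
    intro l
    induction l with
    | nil => exact ⟨0, by simp⟩
    | cons a l ih =>
      obtain ⟨N₁, hN₁⟩ := ih
      obtain ⟨N₂, hN₂⟩ := hmem a
      refine ⟨max N₁ N₂, ?_⟩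
      intro v hv
      rcases List.mem_cons.mp hv with h | h
      · exact hmono (le_max_right N₁ N₂) (h ▸ hN₂)
      · exact hmono (le_max_left N₁ N₂) (hN₁ v h)
  intro e he
  constructor
  · -- e in the free MSF: eventually in every finite MST
    intro hmst
    induction e with
    | h a b =>
    obtain ⟨Na, hNa⟩ := hmem a
    obtain ⟨Nb, hNb⟩ := hmem b
    refine ⟨max Na Nb, fun n hn => ?_⟩
    have ha : a ∈ Vn n := hmono (le_trans (le_max_left Na Nb) hn) hNa
    have hb : b ∈ Vn n := hmono (le_trans (le_max_right Na Nb) hn) hNb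
    refine ⟨?_, ?_⟩
    · exact (mem_edgeSet _).mpr ⟨(mem_edgeSet _).mp he, ha, hb⟩
    · intro x y hxy p hp
      have hsub : ∀ f ∈ p.edges, f ∈ G.edgeSet := by
        intro f hf
        induction f with
        | h u v => exact (mem_edgeSet _).mpr (Walk.adj_of_mem_edges p hf).1
      have hq : ∃ f ∈ (p.transfer G hsub).edges, U s(a, b) ≤ U f :=
        hmst.2 x y hxy (p.transfer G hsub) (hp.transfer hsub)
      rwa [Walk.edges_transfer] at hq
  · -- e not in the free MSF: eventually not in any finite MST
    intro hmst
    simp only [mstEdges, Set.mem_setOf_eq, not_and, not_forall] at hmst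
    obtain ⟨a, b, hab, p, hp, hlt⟩ := hmst he
    push_neg at hlt
    obtain ⟨N, hN⟩ := hlist p.support
    refine ⟨N, fun n hn h => ?_⟩
    have hsupp : ∀ v ∈ p.support, v ∈ Vn n := fun v hv => hmono hn (hN v hv)
    have hsub : ∀ f ∈ p.edges, f ∈ (restrictG G (Vn n)).edgeSet := by
      intro f hf
      induction f with
      | h u v =>
        exact (mem_edgeSet _).mpr ⟨Walk.adj_of_mem_edges p hf,
          hsupp u (Walk.fst_mem_support_of_mem_edges p hf),
          hsupp v (Walk.snd_mem_support_of_mem_edges p hf)⟩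
    obtain ⟨f, hf, hle⟩ := h.2 a b hab (p.transfer _ hsub) (hp.transfer hsub)
    rw [Walk.edges_transfer] at hf
    exact absurd hle (not_le.mpr (hab ▸ hlt f hf))
end

section
/- Let G be a locally finite graph and U : E → ℝ injective. Then for every edge e, Z_f(e) = sup over all sets W ⊆ V with e ∈ ∂_E W of inf{U(e') : e' ∈ ∂_E W \ {e}}, where Z_f(e) := inf over simple paths P in G \ {e} connecting the endpoints of e of max{U(e') : e' ∈ P} (with Z_f(e) := +∞ if no such path exists, and with inf over an empty set equal to +∞). Moreover, the supremum is achieved. -/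
open SimpleGraph

/-- The maximum label along a list of edges, as an extended real
(`⊥` for the empty list, but paths between distinct vertices are nonempty). -/
noncomputable def listMaxE {V : Type*} (U : Sym2 V → ℝ) (L : List (Sym2 V)) : EReal :=
  sSup {y : EReal | ∃ f ∈ L, y = (U f : EReal)}

/-- `Z_f(e)`: the infimum over simple paths in `G \ {e}` connecting the endpoints
of `e` of the maximum label along the path; `+∞` (`= sInf ∅`) if there is no
such path. -/
noncomputable def ZfE {V : Type*} (G : SimpleGraph V) (U : Sym2 V → ℝ) (e : Sym2 V) :
    EReal :=
  sInf {x : EReal | ∃ (a b : V) (p : G.Walk a b), e = s(a, b) ∧ p.IsPath ∧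
    e ∉ p.edges ∧ x = listMaxE U p.edges}

/-- `inf {U(e') : e' ∈ ∂_E W \ {e}}`, as an extended real (`+∞` if empty). -/
noncomputable def cutInfE {V : Type*} (G : SimpleGraph V) (U : Sym2 V → ℝ)
    (W : Set V) (e : Sym2 V) : EReal :=
  sInf {y : EReal | ∃ f ∈ cutEdges G W \ {e}, y = (U f : EReal)}


private lemma listMaxE_lt_of_forall {V : Type*} (U : Sym2 V → ℝ) {L : List (Sym2 V)}
    (hL : L ≠ []) {z : EReal} (h : ∀ f ∈ L, (U f : EReal) < z) : listMaxE U L < z := by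
  have hset : {y : EReal | ∃ f ∈ L, y = (U f : EReal)}
      = (fun f => (U f : EReal)) '' {f | f ∈ L} := by
    ext y; simp [eq_comm]
  have hfin : {y : EReal | ∃ f ∈ L, y = (U f : EReal)}.Finite := by
    rw [hset]; exact L.finite_toSet.image _
  have hne : {y : EReal | ∃ f ∈ L, y = (U f : EReal)}.Nonempty := by
    obtain ⟨f, hf⟩ := List.exists_mem_of_ne_nil L hL
    exact ⟨_, f, hf, rfl⟩
  have hmem := hne.csSup_mem hfin
  obtain ⟨f, hf, heq⟩ := hmem
  rw [listMaxE, heq]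
  exact h f hf

private lemma walk_eq_of_edges_nil {V : Type*} {G : SimpleGraph V} {x y : V}
    (q : G.Walk x y) (h : q.edges = []) : x = y := by
  cases q with
  | nil => rfl
  | cons _ _ => simp [SimpleGraph.Walk.edges_cons] at h

private lemma cross_lemma {V : Type*} (G : SimpleGraph V) (W : Set V) :
    ∀ {x y : V} (p : G.Walk x y), x ∈ W → y ∉ W → ∃ g ∈ p.edges, g ∈ cutEdges G W := by
  intro x y p
  induction p with
  | nil => intro hx hy; exact absurd hx hy
  | @cons u v w h q ih =>
    intro hx hy
    by_cases hv : v ∈ W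
    · obtain ⟨g, hg, hgc⟩ := ih hv hy
      exact ⟨g, List.mem_cons_of_mem _ hg, hgc⟩
    · exact ⟨s(u, v), List.mem_cons_self, G.mem_edgeSet.2 h, u, v, rfl, hx, hv⟩

/-- `Z_f(e)` equals the supremum over all cuts `∂_E W` containing `e`
of the infimum label on `∂_E W \ {e}`, and this supremum is achieved. -/
theorem stmt6 {V : Type*} (G : SimpleGraph V)
    (hlf : ∀ v : V, (G.neighborSet v).Finite)
    (U : Sym2 V → ℝ) (hU : Set.InjOn U G.edgeSet)
    (e : Sym2 V) (he : e ∈ G.edgeSet) :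
    ZfE G U e = sSup {x : EReal | ∃ W : Set V, e ∈ cutEdges G W ∧ x = cutInfE G U W e} ∧
    ∃ W : Set V, e ∈ cutEdges G W ∧ cutInfE G U W e = ZfE G U e := by
  classical
  revert he
  induction e using Sym2.ind with
  | _ a b =>
  intro he
  have hab : G.Adj a b := he
  set Z := ZfE G U s(a, b) with hZdef
  -- Direction 1: every cut infimum is at most Z
  have dir1 : ∀ W : Set V, s(a, b) ∈ cutEdges G W → cutInfE G U W s(a, b) ≤ Z := by
    intro W hW
    apply le_sInf
    rintro x ⟨a', b', p, hab', hp, hep, rfl⟩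
    obtain ⟨_, u, v, huv, hu, hv⟩ := hW
    have hsym : s(a', b') = s(u, v) := hab' ▸ huv
    rw [Sym2.eq_iff] at hsym
    have hcases : (a' ∈ W ∧ b' ∉ W) ∨ (a' ∉ W ∧ b' ∈ W) := by
      rcases hsym with ⟨h1, h2⟩ | ⟨h1, h2⟩
      · subst h1; subst h2; exact Or.inl ⟨hu, hv⟩
      · subst h1; subst h2; exact Or.inr ⟨hv, hu⟩
    obtain ⟨g, hg, hgc⟩ : ∃ g ∈ p.edges, g ∈ cutEdges G W := by
      rcases hcases with ⟨h1, h2⟩ | ⟨h1, h2⟩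
      · exact cross_lemma G W p h1 h2
      · obtain ⟨g, hg, hgc⟩ := cross_lemma G W p.reverse h2 h1
        exact ⟨g, by simpa using hg, hgc⟩
    have hgne : g ∉ ({s(a, b)} : Set (Sym2 V)) := by
      intro hgeq
      exact hep (by rwa [Set.mem_singleton_iff.mp hgeq] at hg)
    calc cutInfE G U W s(a, b) ≤ (U g : EReal) := sInf_le ⟨g, ⟨hgc, hgne⟩, rfl⟩
      _ ≤ listMaxE U p.edges := le_sSup ⟨g, hg, rfl⟩
  -- The achieving cut
  set W0 : Set V := {v | ∃ p : G.Walk a v, s(a, b) ∉ p.edges ∧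
    ∀ f ∈ p.edges, (U f : EReal) < Z} with hW0def
  have haW : a ∈ W0 := ⟨SimpleGraph.Walk.nil, by simp, by simp⟩
  have hbW : b ∉ W0 := by
    rintro ⟨p, hpe, hplt⟩
    have hq := p.bypass_isPath
    have hsub := p.edges_bypass_subset
    have hne : p.bypass.edges ≠ [] := fun h => hab.ne (walk_eq_of_edges_nil _ h)
    have hlt : listMaxE U p.bypass.edges < Z :=
      listMaxE_lt_of_forall U hne (fun f hf => hplt f (hsub hf))
    have hge : Z ≤ listMaxE U p.bypass.edges :=
      sInf_le ⟨a, b, p.bypass, rfl, hq, fun h => hpe (hsub h), rfl⟩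
    exact absurd (lt_of_le_of_lt hge hlt) (lt_irrefl _)
  have hcutmem : s(a, b) ∈ cutEdges G W0 := ⟨he, a, b, rfl, haW, hbW⟩
  have hcut : ∀ f ∈ cutEdges G W0 \ {s(a, b)}, Z ≤ (U f : EReal) := by
    rintro f ⟨⟨hfE, u, v, rfl, hu, hv⟩, hfne⟩
    by_contra hlt
    rw [not_le] at hlt
    obtain ⟨p, hpe, hplt⟩ := hu
    have hadj : G.Adj u v := hfE
    refine hv ⟨p.concat hadj, ?_, ?_⟩
    · rw [SimpleGraph.Walk.edges_concat]
      intro hmem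
      rw [List.concat_eq_append] at hmem
      rcases List.mem_append.mp hmem with h | h
      · exact hpe h
      · exact hfne (Set.mem_singleton_iff.mpr (List.mem_singleton.mp h).symm)
    · intro f hf
      rw [SimpleGraph.Walk.edges_concat] at hf
      rw [List.concat_eq_append] at hf
      rcases List.mem_append.mp hf with h | h
      · exact hplt f h
      · rw [List.mem_singleton.mp h]; exact hlt
  have hge : Z ≤ cutInfE G U W0 s(a, b) := by
    apply le_sInf
    rintro y ⟨f, hf, rfl⟩
    exact hcut f hf
  have heq : cutInfE G U W0 s(a, b) = Z := le_antisymm (dir1 W0 hcutmem) hge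
  refine ⟨le_antisymm (le_sSup ⟨W0, hcutmem, heq.symm⟩) (sSup_le ?_), W0, hcutmem, heq⟩
  rintro x ⟨W, hW, rfl⟩
  exact dir1 W hW
end

section
/- Let G be an infinite, locally finite, connected simple graph and U : E → ℝ injective. Then the union ⋃_{v ∈ V} T_U(v) of the invasion trees of all vertices is equal (as an edge set) to the wired minimal spanning forest F_w(U). -/
open SimpleGraph
open scoped Classical

/-- One step of the invasion process: add the least edge joining the current
vertex set to its complement (if such a least edge exists), together with its
endpoints. -/
noncomputable def invasionStep {V : Type*} (G : SimpleGraph V) (U : Sym2 V → ℝ)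
    (P : Set (Sym2 V) × Set V) : Set (Sym2 V) × Set V :=
  if h : ∃ e, e ∈ cutEdges G P.2 ∧ ∀ f ∈ cutEdges G P.2, U e ≤ U f then
    (insert h.choose P.1, P.2 ∪ {x : V | x ∈ h.choose})
  else P

/-- The invasion process started at `v`: the pair (edges invaded, vertices invaded)
after `n` steps. -/
noncomputable def invasionAux {V : Type*} (G : SimpleGraph V) (U : Sym2 V → ℝ)
    (v : V) : ℕ → Set (Sym2 V) × Set V
  | 0 => (∅, {v})
  | n + 1 => invasionStep G U (invasionAux G U v n)

/-- The invasion tree of `v`: the union of the edges invaded at all steps. -/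
noncomputable def invTree {V : Type*} (G : SimpleGraph V) (U : Sym2 V → ℝ)
    (v : V) : Set (Sym2 V) :=
  ⋃ n : ℕ, (invasionAux G U v n).1

namespace Stmt9

variable {V : Type*}

lemma sym2_setOf_finite (e : Sym2 V) : {x : V | x ∈ e}.Finite := by
  induction e using Sym2.ind with
  | _ a b =>
    have h : {x : V | x ∈ s(a, b)} ⊆ {a, b} := by
      intro x hx
      rcases Sym2.mem_iff.1 hx with h | h <;> simp [h]
    exact ((Set.finite_singleton b).insert a).subset h

lemma invasionAux_zero (G : SimpleGraph V) (U : Sym2 V → ℝ) (v : V) :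
    invasionAux G U v 0 = (∅, {v}) := rfl

lemma invasionAux_succ (G : SimpleGraph V) (U : Sym2 V → ℝ) (v : V) (n : ℕ) :
    invasionAux G U v (n + 1) = invasionStep G U (invasionAux G U v n) := rfl

lemma invasionStep_cases (G : SimpleGraph V) (U : Sym2 V → ℝ) (P : Set (Sym2 V) × Set V) :
    invasionStep G U P = P ∨
      ∃ e, e ∈ cutEdges G P.2 ∧ (∀ f ∈ cutEdges G P.2, U e ≤ U f) ∧
        invasionStep G U P = (insert e P.1, P.2 ∪ {x : V | x ∈ e}) := by
  unfold invasionStep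
  split
  · next h => exact Or.inr ⟨h.choose, h.choose_spec.1, h.choose_spec.2, rfl⟩
  · exact Or.inl rfl

lemma invasionStep_pos (G : SimpleGraph V) (U : Sym2 V → ℝ) (P : Set (Sym2 V) × Set V)
    (h : ∃ e, e ∈ cutEdges G P.2 ∧ ∀ f ∈ cutEdges G P.2, U e ≤ U f) :
    ∃ e, e ∈ cutEdges G P.2 ∧ (∀ f ∈ cutEdges G P.2, U e ≤ U f) ∧
      invasionStep G U P = (insert e P.1, P.2 ∪ {x : V | x ∈ e}) := by
  refine ⟨h.choose, h.choose_spec.1, h.choose_spec.2, ?_⟩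
  unfold invasionStep
  rw [dif_pos h]

lemma W_subset_step (G : SimpleGraph V) (U : Sym2 V → ℝ) (P : Set (Sym2 V) × Set V) :
    P.2 ⊆ (invasionStep G U P).2 := by
  rcases invasionStep_cases G U P with h | ⟨e, _, _, h⟩ <;> rw [h]
  exact Set.subset_union_left

lemma E_subset_step (G : SimpleGraph V) (U : Sym2 V → ℝ) (P : Set (Sym2 V) × Set V) :
    P.1 ⊆ (invasionStep G U P).1 := by
  rcases invasionStep_cases G U P with h | ⟨e, _, _, h⟩ <;> rw [h]
  exact Set.subset_insert _ _

variable (G : SimpleGraph V) (U : Sym2 V → ℝ) (v : V)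

lemma W_mono {m n : ℕ} (h : m ≤ n) :
    (invasionAux G U v m).2 ⊆ (invasionAux G U v n).2 := by
  induction n, h using Nat.le_induction with
  | base => exact subset_rfl
  | succ n _ ih =>
    exact ih.trans (by rw [invasionAux_succ]; exact W_subset_step G U _)

lemma E_mono {m n : ℕ} (h : m ≤ n) :
    (invasionAux G U v m).1 ⊆ (invasionAux G U v n).1 := by
  induction n, h using Nat.le_induction with
  | base => exact subset_rfl
  | succ n _ ih =>
    exact ih.trans (by rw [invasionAux_succ]; exact E_subset_step G U _)

lemma start_mem_W (n : ℕ) : v ∈ (invasionAux G U v n).2 :=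
  W_mono G U v (Nat.zero_le n) (by rw [invasionAux_zero]; exact rfl)

lemma W_finite (n : ℕ) : (invasionAux G U v n).2.Finite := by
  induction n with
  | zero => rw [invasionAux_zero]; exact Set.finite_singleton v
  | succ n ih =>
    rw [invasionAux_succ]
    rcases invasionStep_cases G U (invasionAux G U v n) with h | ⟨e, _, _, h⟩ <;> rw [h]
    · exact ih
    · exact ih.union (sym2_setOf_finite e)

lemma crossing (W : Set V) : ∀ {a b : V} (p : G.Walk a b), a ∈ W → b ∉ W →
    ∃ f ∈ p.edges, f ∈ cutEdges G W := by
  intro a b p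
  induction p with
  | nil => intro ha hb; exact absurd ha hb
  | @cons a c b h p ih =>
    intro ha hb
    by_cases hc : c ∈ W
    · obtain ⟨f, hf, hf'⟩ := ih hc hb
      exact ⟨f, List.mem_cons_of_mem _ hf, hf'⟩
    · exact ⟨s(a, c), by simp, ⟨G.mem_edgeSet.2 h, a, c, rfl, ha, hc⟩⟩

lemma cutEdges_finite (hlf : ∀ v : V, (G.neighborSet v).Finite) {W : Set V} (hW : W.Finite) :
    (cutEdges G W).Finite := by
  have h : cutEdges G W ⊆ ⋃ a ∈ W, (fun b => s(a, b)) '' (G.neighborSet a) := by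
    rintro e ⟨he, a, b, rfl, ha, hb⟩
    exact Set.mem_biUnion ha ⟨b, G.mem_edgeSet.1 he, rfl⟩
  exact (hW.biUnion fun a _ => (hlf a).image _).subset h

lemma cutEdges_nonempty [Infinite V] (hG : G.Connected) {W : Set V} (hW : W.Finite)
    (hne : W.Nonempty) : (cutEdges G W).Nonempty := by
  obtain ⟨a, ha⟩ := hne
  obtain ⟨u, hu⟩ := hW.infinite_compl.nonempty
  obtain ⟨p⟩ := hG.preconnected a u
  obtain ⟨f, _, hf⟩ := crossing G W p ha hu
  exact ⟨f, hf⟩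

lemma step_spec [Infinite V] (hlf : ∀ v : V, (G.neighborSet v).Finite) (hG : G.Connected)
    (n : ℕ) :
    ∃ e, e ∈ cutEdges G (invasionAux G U v n).2 ∧
      (∀ f ∈ cutEdges G (invasionAux G U v n).2, U e ≤ U f) ∧
      invasionAux G U v (n + 1) =
        (insert e (invasionAux G U v n).1, (invasionAux G U v n).2 ∪ {x : V | x ∈ e}) := by
  have hfin := W_finite G U v n
  have hne : (invasionAux G U v n).2.Nonempty := ⟨v, start_mem_W G U v n⟩
  have hcut := cutEdges_nonempty G hG hfin hne
  obtain ⟨e, he, hm⟩ := Set.exists_min_image _ U (cutEdges_finite G hlf hfin) hcut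
  rw [invasionAux_succ]
  exact invasionStep_pos G U _ ⟨e, he, hm⟩

lemma E_props [Infinite V] (hlf : ∀ v : V, (G.neighborSet v).Finite) (hG : G.Connected)
    (n : ℕ) : ∀ f ∈ (invasionAux G U v n).1,
      f ∈ G.edgeSet ∧ ∀ x ∈ f, x ∈ (invasionAux G U v n).2 := by
  induction n with
  | zero => rw [invasionAux_zero]; rintro f ⟨⟩
  | succ n ih =>
    obtain ⟨e, hcut, _, heq⟩ := step_spec G U v hlf hG n
    rw [heq]
    intro f hf
    rcases Set.mem_insert_iff.1 hf with rfl | hf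
    · exact ⟨hcut.1, fun x hx => Or.inr hx⟩
    · exact ⟨(ih f hf).1, fun x hx => Or.inl ((ih f hf).2 x hx)⟩

lemma invTree_subset_edgeSet [Infinite V] (hlf : ∀ v : V, (G.neighborSet v).Finite)
    (hG : G.Connected) : invTree G U v ⊆ G.edgeSet := by
  intro f hf
  obtain ⟨n, hf⟩ := Set.mem_iUnion.1 hf
  exact (E_props G U v hlf hG n f hf).1

lemma walk_to [Infinite V] (hlf : ∀ v : V, (G.neighborSet v).Finite) (hG : G.Connected)
    (n : ℕ) : ∀ u ∈ (invasionAux G U v n).2,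
      ∃ p : G.Walk v u, ∀ f ∈ p.edges, f ∈ (invasionAux G U v n).1 := by
  induction n with
  | zero =>
    intro u hu
    rw [invasionAux_zero] at hu
    rcases hu with rfl
    exact ⟨SimpleGraph.Walk.nil, by simp⟩
  | succ n ih =>
    obtain ⟨e, hcut, _, heq⟩ := step_spec G U v hlf hG n
    intro u hu
    rw [heq] at hu
    obtain ⟨he, a, b, hab, ha, hb⟩ := hcut
    rcases hu with hu | hu
    · obtain ⟨p, hp⟩ := ih u hu
      exact ⟨p, fun f hf => by rw [heq]; exact Set.mem_insert_of_mem _ (hp f hf)⟩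
    · subst hab
      have hadj : G.Adj a b := G.mem_edgeSet.1 he
      have hu' : u ∈ s(a, b) := hu
      rcases Sym2.mem_iff.1 hu' with rfl | rfl
      · obtain ⟨p, hp⟩ := ih u ha
        exact ⟨p, fun f hf => by rw [heq]; exact Set.mem_insert_of_mem _ (hp f hf)⟩
      · obtain ⟨p, hp⟩ := ih a ha
        refine ⟨p.concat hadj, ?_⟩
        intro f hf
        rw [SimpleGraph.Walk.edges_concat, List.concat_eq_append] at hf
        rw [heq]
        rcases List.mem_append.1 hf with hf | hf
        · exact Set.mem_insert_of_mem _ (hp f hf)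
        · rw [List.mem_singleton] at hf
          subst hf
          exact Set.mem_insert _ _

lemma C_infinite [Infinite V] (hlf : ∀ v : V, (G.neighborSet v).Finite) (hG : G.Connected) :
    {u : V | ∃ n, u ∈ (invasionAux G U v n).2}.Infinite := by
  have hnew : ∀ n : ℕ, ∃ z : V, z ∈ (invasionAux G U v (n + 1)).2 ∧
      z ∉ (invasionAux G U v n).2 := by
    intro n
    obtain ⟨e, hcut, _, heq⟩ := step_spec G U v hlf hG n
    obtain ⟨_, a, b, hab, _, hb⟩ := hcut
    refine ⟨b, ?_, hb⟩
    rw [heq]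
    exact Or.inr (by rw [hab]; exact Sym2.mem_iff.2 (Or.inr rfl))
  choose z hz₁ hz₂ using hnew
  have hinj : Function.Injective z := by
    have key : ∀ m n : ℕ, m < n → z m ≠ z n := by
      intro m n hmn h
      exact hz₂ n (h ▸ W_mono G U v hmn (hz₁ m))
    intro m n h
    rcases lt_trichotomy m n with h' | h' | h'
    · exact absurd h (key m n h')
    · exact h'
    · exact absurd h.symm (key n m h')
  exact Set.infinite_of_injective_forall_mem hinj fun n => ⟨n + 1, hz₁ n⟩

lemma edge_bound [Infinite V] (hlf : ∀ v : V, (G.neighborSet v).Finite) (hG : G.Connected)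
    (hU : Set.InjOn U G.edgeSet) {e : Sym2 V} (he : e ∈ G.edgeSet) {y : V}
    (hxy : e = s(v, y)) (hne : e ∉ invTree G U v) :
    ∀ n : ℕ, (∀ m, m < n → y ∉ (invasionAux G U v m).2) →
      ∀ f ∈ (invasionAux G U v n).1, U f < U e := by
  intro n
  induction n with
  | zero => rw [invasionAux_zero]; rintro _ f ⟨⟩
  | succ n ih =>
    intro h f hf
    obtain ⟨en, hcut, hmin, heq⟩ := step_spec G U v hlf hG n
    rw [heq] at hf
    have hecut : e ∈ cutEdges G (invasionAux G U v n).2 :=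
      ⟨he, v, y, hxy, start_mem_W G U v n, h n (Nat.lt_succ_self n)⟩
    rcases Set.mem_insert_iff.1 hf with rfl | hf
    · have hle : U f ≤ U e := hmin e hecut
      have hne' : f ≠ e := by
        rintro rfl
        exact hne (Set.mem_iUnion.2 ⟨n + 1, by rw [heq]; exact Set.mem_insert _ _⟩)
      exact lt_of_le_of_ne hle fun h' => hne' (hU hcut.1 he h')
    · exact ih (fun m hm => h m (hm.trans (Nat.lt_succ_self n))) f hf

def avoid (H : SimpleGraph V) (S : Finset V) : SimpleGraph V where
  Adj u w := H.Adj u w ∧ u ∉ S ∧ w ∉ S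
  symm := ⟨fun u w ⟨h, hu, hw⟩ => ⟨h.symm, hw, hu⟩⟩
  loopless := ⟨fun u ⟨h, _, _⟩ => H.irrefl h⟩

lemma avoid_adj {H : SimpleGraph V} {S : Finset V} {u w : V} :
    (avoid H S).Adj u w ↔ H.Adj u w ∧ u ∉ S ∧ w ∉ S := Iff.rfl

def Good (H : SimpleGraph V) (y : V) (S : Finset V) : Prop :=
  y ∉ S ∧ {u : V | (avoid H S).Reachable y u}.Infinite

lemma reach_shift {H : SimpleGraph V} {S : Finset V} {y u : V}
    (hu : (avoid H S).Reachable y u) (huy : u ≠ y) :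
    ∃ z, (avoid H S).Adj y z ∧ (avoid H (insert y S)).Reachable z u := by
  obtain ⟨p⟩ := hu
  have key : ∀ q : (avoid H S).Walk y u, q.IsPath →
      ∃ z, (avoid H S).Adj y z ∧ (avoid H (insert y S)).Reachable z u := by
    intro q hq
    cases q with
    | nil => exact absurd rfl huy
    | @cons _ c _ hadj q' =>
      rw [SimpleGraph.Walk.cons_isPath_iff] at hq
      obtain ⟨hq', hys⟩ := hq
      refine ⟨c, hadj, ⟨q'.transfer _ ?_⟩⟩
      intro e he
      induction e using Sym2.ind with
      | _ cc dd =>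
        have hcd : (avoid H S).Adj cc dd :=
          (avoid H S).mem_edgeSet.1 (q'.edges_subset_edgeSet he)
        have hc : cc ∈ q'.support := SimpleGraph.Walk.fst_mem_support_of_mem_edges q' he
        have hd : dd ∈ q'.support := SimpleGraph.Walk.snd_mem_support_of_mem_edges q' he
        refine (avoid H (insert y S)).mem_edgeSet.2 ⟨hcd.1, ?_, ?_⟩
        · rw [Finset.mem_insert]
          rintro (rfl | hS)
          · exact hys hc
          · exact hcd.2.1 hS
        · rw [Finset.mem_insert]
          rintro (rfl | hS)
          · exact hys hd
          · exact hcd.2.2 hS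
  exact key p.bypass p.bypass_isPath

lemma good_step {H : SimpleGraph V} (hlf : ∀ v : V, (H.neighborSet v).Finite)
    {y : V} {S : Finset V} (h : Good H y S) :
    ∃ z, H.Adj y z ∧ Good H z (insert y S) := by
  by_contra hcon
  push_neg at hcon
  have hNfin : {z : V | (avoid H S).Adj y z}.Finite :=
    (hlf y).subset fun z hz => hz.1
  have hfin : ∀ z ∈ {z : V | (avoid H S).Adj y z},
      {u : V | (avoid H (insert y S)).Reachable z u}.Finite := by
    intro z hz
    have hzG : ¬Good H z (insert y S) := hcon z hz.1
    rw [Good] at hzG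
    push_neg at hzG
    have hz' : z ∉ insert y S := by
      rw [Finset.mem_insert]
      rintro (rfl | hS)
      · exact H.irrefl hz.1
      · exact hz.2.2 hS
    exact hzG hz'
  have key : {u : V | (avoid H S).Reachable y u} \ {y} ⊆
      ⋃ z ∈ {z : V | (avoid H S).Adj y z},
        {u : V | (avoid H (insert y S)).Reachable z u} := by
    rintro u ⟨hu, huy⟩
    obtain ⟨z, hz, hr⟩ := reach_shift hu (by simpa using huy)
    exact Set.mem_biUnion hz hr
  have hI : ({u : V | (avoid H S).Reachable y u} \ {y}).Infinite :=
    h.2.diff (Set.finite_singleton y)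
  exact hI ((hNfin.biUnion hfin).subset key)

noncomputable def rayStep (H : SimpleGraph V) (p : V × Finset V) : V × Finset V :=
  if h : ∃ z, H.Adj p.1 z ∧ Good H z (insert p.1 p.2) then (h.choose, insert p.1 p.2) else p

noncomputable def rayChain (H : SimpleGraph V) (x : V) : ℕ → V × Finset V
  | 0 => (x, ∅)
  | n + 1 => rayStep H (rayChain H x n)

lemma good_chain {H : SimpleGraph V} (hlf : ∀ v : V, (H.neighborSet v).Finite)
    {x : V} (h0 : Good H x ∅) : ∀ n, Good H (rayChain H x n).1 (rayChain H x n).2 := by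
  intro n
  induction n with
  | zero => exact h0
  | succ n ih =>
    have hex := good_step hlf ih
    show Good H (rayStep H (rayChain H x n)).1 (rayStep H (rayChain H x n)).2
    rw [rayStep, dif_pos hex]
    exact hex.choose_spec.2

lemma chain_step {H : SimpleGraph V} (hlf : ∀ v : V, (H.neighborSet v).Finite)
    {x : V} (h0 : Good H x ∅) (n : ℕ) :
    H.Adj (rayChain H x n).1 (rayChain H x (n + 1)).1 ∧
      (rayChain H x (n + 1)).2 = insert (rayChain H x n).1 (rayChain H x n).2 := by
  have hex := good_step hlf (good_chain hlf h0 n)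
  show H.Adj _ (rayStep H (rayChain H x n)).1 ∧ (rayStep H (rayChain H x n)).2 = _
  rw [rayStep, dif_pos hex]
  exact ⟨hex.choose_spec.1, rfl⟩

lemma chain_mem {H : SimpleGraph V} (hlf : ∀ v : V, (H.neighborSet v).Finite)
    {x : V} (h0 : Good H x ∅) : ∀ {m n : ℕ}, m < n →
      (rayChain H x m).1 ∈ (rayChain H x n).2 := by
  intro m n h
  induction n with
  | zero => exact absurd h (Nat.not_lt_zero m)
  | succ n ih =>
    rw [(chain_step hlf h0 n).2, Finset.mem_insert]
    rcases Nat.lt_succ_iff_lt_or_eq.1 h with h' | h'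
    · exact Or.inr (ih h')
    · exact Or.inl (by rw [h'])

lemma chain_inj {H : SimpleGraph V} (hlf : ∀ v : V, (H.neighborSet v).Finite)
    {x : V} (h0 : Good H x ∅) : Function.Injective fun n => (rayChain H x n).1 := by
  have key : ∀ m n : ℕ, m < n → (rayChain H x m).1 ≠ (rayChain H x n).1 := by
    intro m n hmn h
    exact (good_chain hlf h0 n).1 (h ▸ chain_mem hlf h0 hmn)
  intro m n h
  rcases lt_trichotomy m n with h' | h' | h'
  · exact absurd h (key m n h')
  · exact h'
  · exact absurd h.symm (key n m h')

lemma exists_ray (H : SimpleGraph V) (hlf : ∀ v : V, (H.neighborSet v).Finite) (x : V)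
    (hx : {u : V | H.Reachable x u}.Infinite) :
    ∃ r : ℕ → V, r 0 = x ∧ IsRay H r := by
  have havoid : avoid H (∅ : Finset V) = H := by
    ext u w
    show H.Adj u w ∧ u ∉ (∅ : Finset V) ∧ w ∉ (∅ : Finset V) ↔ H.Adj u w
    simp
  have h0 : Good H x ∅ := ⟨Finset.notMem_empty x, by rw [havoid]; exact hx⟩
  exact ⟨fun n => (rayChain H x n).1, rfl, chain_inj hlf h0,
    fun n => (chain_step hlf h0 n).1⟩

lemma ray_exit {G : SimpleGraph V} {r : ℕ → V} (hr : IsRay G r) {W : Set V}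
    (hW : W.Finite) (h0 : r 0 ∈ W) : ∃ k, r k ∈ W ∧ r (k + 1) ∉ W := by
  have hex : ∃ n, r n ∉ W := by
    by_contra hc
    push_neg at hc
    exact (Set.infinite_range_of_injective hr.1) (hW.subset (Set.range_subset_iff.2 hc))
  have hm : r (Nat.find hex) ∉ W := Nat.find_spec hex
  have hm0 : Nat.find hex ≠ 0 := by
    intro h
    rw [h] at hm
    exact hm h0
  refine ⟨Nat.find hex - 1, ?_, ?_⟩
  · have := Nat.find_min hex (Nat.pred_lt hm0)
    exact not_not.1 this
  · have h1 : Nat.find hex - 1 + 1 = Nat.find hex := by omega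
    rw [h1]
    exact hm

lemma cut_min_conds {W : Set V} (hW : W.Finite)
    {e : Sym2 V} (hmin : ∀ f ∈ cutEdges G W, U e ≤ U f) {a b : V} (hab : e = s(a, b))
    (ha : a ∈ W) (hb : b ∉ W) :
    (∀ p : G.Walk a b, p.IsPath → ∃ f ∈ p.edges, U e ≤ U f) ∧
    (∀ r₁ r₂ : ℕ → V, IsRay G r₁ → IsRay G r₂ → r₁ 0 = a → r₂ 0 = b →
      (∀ m n : ℕ, r₁ m ≠ r₂ n) → ∃ f ∈ rayEdges r₁ ∪ rayEdges r₂, U e ≤ U f) := by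
  constructor
  · intro p _
    obtain ⟨f, hf, hfc⟩ := crossing G W p ha hb
    exact ⟨f, hf, hmin f hfc⟩
  · intro r₁ r₂ hr₁ _ h₁ _ _
    obtain ⟨k, hk, hk'⟩ := ray_exit hr₁ hW (h₁ ▸ ha)
    exact ⟨s(r₁ k, r₁ (k + 1)), Or.inl ⟨k, rfl⟩,
      hmin _ ⟨G.mem_edgeSet.2 (hr₁.2 k), _, _, rfl, hk, hk'⟩⟩

lemma E_subset_wmsf [Infinite V] (hlf : ∀ v : V, (G.neighborSet v).Finite)
    (hG : G.Connected) (n : ℕ) : (invasionAux G U v n).1 ⊆ wmsfEdges G U := by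
  induction n with
  | zero => rw [invasionAux_zero]; rintro f ⟨⟩
  | succ n ih =>
    obtain ⟨en, hcut, hmin, heq⟩ := step_spec G U v hlf hG n
    rw [heq]
    intro f hf
    rcases Set.mem_insert_iff.1 hf with rfl | hf
    · obtain ⟨hee, a0, b0, hab0, ha0, hb0⟩ := hcut
      refine ⟨hee, ?_⟩
      intro a b hab
      have hWfin := W_finite G U v n
      have heqs : s(a, b) = s(a0, b0) := hab ▸ hab0
      rcases Sym2.eq_iff.1 heqs with ⟨rfl, rfl⟩ | ⟨rfl, rfl⟩
      · exact cut_min_conds G U hWfin hmin hab ha0 hb0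
      · have hab' : f = s(b, a) := hab.trans (Sym2.eq_swap)
        have H2 := cut_min_conds G U hWfin hmin hab' ha0 hb0
        constructor
        · intro p hp
          obtain ⟨g, hg, hle⟩ := H2.1 p.reverse hp.reverse
          rw [SimpleGraph.Walk.edges_reverse, List.mem_reverse] at hg
          exact ⟨g, hg, hle⟩
        · intro r₁ r₂ h1 h2 e1 e2 hd
          obtain ⟨g, hg, hle⟩ := H2.2 r₂ r₁ h2 h1 e2 e1 (fun m n h => (hd n m) h.symm)
          rcases hg with hg | hg
          · exact ⟨g, Or.inr hg, hle⟩
          · exact ⟨g, Or.inl hg, hle⟩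
    · exact ih hf

lemma invaded_case [Infinite V] (hlf : ∀ v : V, (G.neighborSet v).Finite)
    (hG : G.Connected) (hU : Set.InjOn U G.edgeSet) {x y : V} (hadj : G.Adj x y)
    (hne : s(x, y) ∉ invTree G U x)
    (hcond : ∀ p : G.Walk x y, p.IsPath → ∃ f ∈ p.edges, U s(x, y) ≤ U f) :
    ∀ n : ℕ, y ∉ (invasionAux G U x n).2 := by
  intro n hy
  have hex : ∃ m, y ∈ (invasionAux G U x m).2 := ⟨n, hy⟩
  have hy₀ := Nat.find_spec hex
  have hlt : ∀ m, m < Nat.find hex → y ∉ (invasionAux G U x m).2 :=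
    fun m hm => Nat.find_min hex hm
  have hbound := edge_bound G U x hlf hG hU (G.mem_edgeSet.2 hadj) rfl hne
    (Nat.find hex) hlt
  obtain ⟨p, hp⟩ := walk_to G U x hlf hG (Nat.find hex) y hy₀
  obtain ⟨f, hf, hle⟩ := hcond p.bypass p.bypass_isPath
  exact absurd hle (not_le.2 (hbound f (hp f (p.edges_bypass_subset hf))))

lemma tree_ray [Infinite V] (hlf : ∀ v : V, (G.neighborSet v).Finite)
    (hG : G.Connected) (x : V) :
    ∃ r : ℕ → V, r 0 = x ∧ IsRay G r ∧ (∀ n, s(r n, r (n + 1)) ∈ invTree G U x) ∧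
      (∀ n, ∃ m, r n ∈ (invasionAux G U x m).2) := by
  set H := SimpleGraph.fromEdgeSet (invTree G U x) with hH
  have hsub := invTree_subset_edgeSet G U x hlf hG
  have hHG : ∀ u w : V, H.Adj u w → G.Adj u w := fun u w h =>
    G.mem_edgeSet.1 (hsub ((SimpleGraph.fromEdgeSet_adj _).1 h).1)
  have hlfH : ∀ u : V, (H.neighborSet u).Finite := fun u =>
    (hlf u).subset fun z hz => hHG u z hz
  have hreach : {u : V | H.Reachable x u}.Infinite := by
    refine (C_infinite G U x hlf hG).mono ?_
    rintro u ⟨n, hu⟩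
    obtain ⟨p, hp⟩ := walk_to G U x hlf hG n u hu
    refine ⟨p.transfer H ?_⟩
    intro e he
    rw [hH, SimpleGraph.edgeSet_fromEdgeSet]
    exact ⟨Set.mem_iUnion.2 ⟨n, hp e he⟩,
      G.not_isDiag_of_mem_edgeSet (p.edges_subset_edgeSet he)⟩
  obtain ⟨r, hr0, hr⟩ := exists_ray H hlfH x hreach
  have hedge : ∀ n, s(r n, r (n + 1)) ∈ invTree G U x := fun n =>
    ((SimpleGraph.fromEdgeSet_adj _).1 (hr.2 n)).1
  refine ⟨r, hr0, ⟨hr.1, fun n => hHG _ _ (hr.2 n)⟩, hedge, ?_⟩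
  intro n
  cases n with
  | zero => exact ⟨0, by rw [hr0, invasionAux_zero]; exact rfl⟩
  | succ n =>
    obtain ⟨m, hm⟩ := Set.mem_iUnion.1 (hedge n)
    exact ⟨m, (E_props G U x hlf hG m _ hm).2 (r (n + 1)) (Sym2.mem_iff.2 (Or.inr rfl))⟩

end Stmt9

/-- The union of the invasion trees of all vertices equals the wired
minimal spanning forest. -/
theorem stmt9 {V : Type*} [Infinite V] (G : SimpleGraph V)
    (hlf : ∀ v : V, (G.neighborSet v).Finite) (hG : G.Connected)
    (U : Sym2 V → ℝ) (hU : Set.InjOn U G.edgeSet) :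
    (⋃ v : V, invTree G U v) = wmsfEdges G U := by
  apply Set.Subset.antisymm
  · intro e he
    obtain ⟨v, he⟩ := Set.mem_iUnion.1 he
    obtain ⟨n, he⟩ := Set.mem_iUnion.1 he
    exact Stmt9.E_subset_wmsf G U v hlf hG n he
  · intro e he
    by_contra hne
    revert he hne
    induction e using Sym2.ind with
    | _ x y =>
      intro he hne
      obtain ⟨hee, hcond'⟩ := he
      have hcond := hcond' x y rfl
      have hadj : G.Adj x y := G.mem_edgeSet.1 hee
      have hnot : ∀ v : V, s(x, y) ∉ invTree G U v :=
        fun v h => hne (Set.mem_iUnion.2 ⟨v, h⟩)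
      have hcondr : ∀ p : G.Walk y x, p.IsPath → ∃ f ∈ p.edges, U s(y, x) ≤ U f := by
        intro p hp
        obtain ⟨f, hf, hle⟩ := hcond.1 p.reverse hp.reverse
        rw [SimpleGraph.Walk.edges_reverse, List.mem_reverse] at hf
        refine ⟨f, hf, ?_⟩
        rwa [Sym2.eq_swap]
      have hA : ∀ n, y ∉ (invasionAux G U x n).2 :=
        Stmt9.invaded_case G U hlf hG hU hadj (hnot x) hcond.1
      have hB : ∀ n, x ∉ (invasionAux G U y n).2 := by
        have h' : s(y, x) ∉ invTree G U y := by rw [Sym2.eq_swap]; exact hnot y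
        exact Stmt9.invaded_case G U hlf hG hU hadj.symm h' hcondr
      have hbx : ∀ n, ∀ f ∈ (invasionAux G U x n).1, U f < U s(x, y) := fun n =>
        Stmt9.edge_bound G U x hlf hG hU hee rfl (hnot x) n fun m _ => hA m
      have hby : ∀ n, ∀ f ∈ (invasionAux G U y n).1, U f < U s(x, y) := fun n =>
        Stmt9.edge_bound G U y hlf hG hU hee Sym2.eq_swap (hnot y) n fun m _ => hB m
      have hdisj : ∀ z : V, (∃ m, z ∈ (invasionAux G U x m).2) →
          (∃ n, z ∈ (invasionAux G U y n).2) → False := by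
        rintro z ⟨m, hm⟩ ⟨n, hn⟩
        obtain ⟨p, hp⟩ := Stmt9.walk_to G U x hlf hG m z hm
        obtain ⟨q, hq⟩ := Stmt9.walk_to G U y hlf hG n z hn
        obtain ⟨f, hf, hle⟩ := hcond.1 (p.append q.reverse).bypass
          (p.append q.reverse).bypass_isPath
        have hf' := (p.append q.reverse).edges_bypass_subset hf
        rw [SimpleGraph.Walk.edges_append] at hf'
        rcases List.mem_append.1 hf' with hf' | hf'
        · exact absurd hle (not_le.2 (hbx m f (hp f hf')))
        · rw [SimpleGraph.Walk.edges_reverse, List.mem_reverse] at hf'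
          exact absurd hle (not_le.2 (hby n f (hq f hf')))
      obtain ⟨r₁, hr₁0, hr₁, hr₁e, hr₁v⟩ := Stmt9.tree_ray G U hlf hG x
      obtain ⟨r₂, hr₂0, hr₂, hr₂e, hr₂v⟩ := Stmt9.tree_ray G U hlf hG y
      have hd : ∀ m n : ℕ, r₁ m ≠ r₂ n := by
        intro m n h
        exact hdisj (r₁ m) (hr₁v m) (h ▸ hr₂v n)
      obtain ⟨f, hf, hle⟩ := hcond.2 r₁ r₂ hr₁ hr₂ hr₁0 hr₂0 hd
      rcases hf with hf | hf
      · obtain ⟨k, hk⟩ := hf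
        have hk' : s(r₁ k, r₁ (k + 1)) = f := hk
        obtain ⟨nn, hnn⟩ := Set.mem_iUnion.1 (hk' ▸ hr₁e k)
        exact absurd hle (not_le.2 (hbx nn f hnn))
      · obtain ⟨k, hk⟩ := hf
        have hk' : s(r₂ k, r₂ (k + 1)) = f := hk
        obtain ⟨nn, hnn⟩ := Set.mem_iUnion.1 (hk' ▸ hr₂e k)
        exact absurd hle (not_le.2 (hby nn f hnn))
end

section
/- Let G be an infinite, locally finite, connected simple graph and U : E → ℝ injective. If x and y are vertices in the same connected component of the wired minimal spanning forest F_w(U), then the symmetric differences I(x) Δ I(y) of their invasion basins and T_U(x) Δ T_U(y) of their invasion trees are finite edge sets. -/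
open SimpleGraph
open scoped Classical

/-- One step of the invasion-basin process: add the lowest edge of `G` not yet
included that is incident to some current vertex (if a lowest such edge exists),
together with its endpoints. -/
noncomputable def basinStep {V : Type*} (G : SimpleGraph V) (U : Sym2 V → ℝ)
    (P : Set (Sym2 V) × Set V) : Set (Sym2 V) × Set V :=
  if h : ∃ e, (e ∈ G.edgeSet ∧ e ∉ P.1 ∧ ∃ x ∈ P.2, x ∈ e) ∧
      ∀ f, (f ∈ G.edgeSet ∧ f ∉ P.1 ∧ ∃ x ∈ P.2, x ∈ f) → U e ≤ U f then
    (insert h.choose P.1, P.2 ∪ {x : V | x ∈ h.choose})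
  else P

/-- The invasion-basin process started at `v`. -/
noncomputable def basinAux {V : Type*} (G : SimpleGraph V) (U : Sym2 V → ℝ)
    (v : V) : ℕ → Set (Sym2 V) × Set V
  | 0 => (∅, {v})
  | n + 1 => basinStep G U (basinAux G U v n)

/-- The invasion basin of `v`: the union of the edges added at all steps. -/
noncomputable def invBasin {V : Type*} (G : SimpleGraph V) (U : Sym2 V → ℝ)
    (v : V) : Set (Sym2 V) :=
  ⋃ n : ℕ, (basinAux G U v n).1

section Helpers
variable {V : Type*}

lemma vertSet_pair (a b : V) : {x | x ∈ s(a,b)} = {a, b} := by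
  ext z; simp [Sym2.mem_iff]

lemma crossing {H : SimpleGraph V} {W : Set V} {u v : V} (p : H.Walk u v) :
    u ∈ W → v ∉ W → ∃ a b, a ∈ W ∧ b ∉ W ∧ H.Adj a b := by
  induction p with
  | nil => intro hu hv; exact absurd hu hv
  | @cons u w v h q ih =>
    intro hu hv
    by_cases hw : w ∈ W
    · exact ih hw hv
    · exact ⟨u, w, hu, hw, h⟩

/-- Delete a set of vertices from a graph. -/
def delVerts (H : SimpleGraph V) (S : Set V) : SimpleGraph V where
  Adj a b := H.Adj a b ∧ a ∉ S ∧ b ∉ S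
  symm := ⟨fun a b h => ⟨h.1.symm, h.2.2, h.2.1⟩⟩
  loopless := ⟨fun a h => H.irrefl h.1⟩

lemma delVerts_anti {H : SimpleGraph V} {S T : Set V} (hST : S ⊆ T) :
    delVerts H T ≤ delVerts H S :=
  fun _ _ h => ⟨h.1, fun hs => h.2.1 (hST hs), fun hs => h.2.2 (hST hs)⟩

lemma reach_delVerts_of_walk {H : SimpleGraph V} {S : Set V} {w : V} :
    ∀ {u z : V} (q : (delVerts H S).Walk u z), w ∉ q.support →
      (delVerts H (insert w S)).Reachable u z := by
  intro u z q
  induction q with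
  | nil => intro _; exact Reachable.refl _
  | @cons u u' z h q ih =>
    intro hw
    rw [SimpleGraph.Walk.support_cons, List.mem_cons] at hw
    push_neg at hw
    have hu' : w ∉ q.support := hw.2
    refine Reachable.trans (Adj.reachable ?_) (ih hu')
    refine ⟨h.1, ?_, ?_⟩
    · simp only [Set.mem_insert_iff]; push_neg
      exact ⟨fun e => hw.1 e.symm, h.2.1⟩
    · simp only [Set.mem_insert_iff]; push_neg
      refine ⟨?_, h.2.2⟩
      intro e
      exact hw.2 (e ▸ q.start_mem_support)

lemma konig_step {H : SimpleGraph V} (hlf : ∀ v : V, (H.neighborSet v).Finite)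
    (S : Set V) (w : V)
    (hinf : {z | (delVerts H S).Reachable w z}.Infinite) :
    ∃ u, H.Adj w u ∧ u ∉ insert w S ∧
      {z | (delVerts H (insert w S)).Reachable u z}.Infinite := by
  set N : Set V := H.neighborSet w with hN
  have hsub : {z | (delVerts H S).Reachable w z} \ {w} ⊆
      ⋃ u ∈ N, {z | (delVerts H (insert w S)).Reachable u z} := by
    rintro z ⟨hz, hzw⟩
    obtain ⟨p⟩ := hz
    have hzw' : z ≠ w := by simpa using hzw
    obtain ⟨q, hq⟩ : ∃ q : (delVerts H S).Walk w z, q.IsPath := ⟨p.bypass, p.bypass_isPath⟩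
    cases q with
    | nil => exact absurd rfl hzw'
    | @cons _ u _ h q' =>
      have hwsup : w ∉ q'.support := by
        have := hq.support_nodup
        rw [SimpleGraph.Walk.support_cons] at this
        exact (List.nodup_cons.mp this).1
      refine Set.mem_biUnion (show u ∈ N from h.1) ?_
      exact reach_delVerts_of_walk q' hwsup
  obtain ⟨u, huN, hu⟩ : ∃ u ∈ N, {z | (delVerts H (insert w S)).Reachable u z}.Infinite := by
    by_contra hcon
    push_neg at hcon
    have : (⋃ u ∈ N, {z | (delVerts H (insert w S)).Reachable u z}).Finite :=
      Set.Finite.biUnion (hlf w) (fun u hu => hcon u hu)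
    exact (hinf.diff (Set.finite_singleton w)) (this.subset hsub)
  refine ⟨u, huN, ?_, hu⟩
  obtain ⟨z, hz, hzu⟩ : ∃ z ∈ {z | (delVerts H (insert w S)).Reachable u z}, z ∉ ({u} : Set V) :=
    ((hu.diff (Set.finite_singleton u)).nonempty).imp (fun x hx => ⟨hx.1, hx.2⟩)
  obtain ⟨p⟩ := hz
  cases p with
  | nil => simp at hzu
  | cons h _ => exact h.2.1

/-- König's lemma: an infinite component of a locally finite graph contains a ray. -/
theorem exists_ray_aux {H : SimpleGraph V} (hlf : ∀ v : V, (H.neighborSet v).Finite) (x : V)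
    (hinf : {z | H.Reachable x z}.Infinite) :
    ∃ r : ℕ → V, r 0 = x ∧ Function.Injective r ∧ ∀ n, H.Adj (r n) (r (n + 1)) := by
  classical
  -- the invariant
  let Inv : V × Set V → Prop := fun p =>
    p.1 ∉ p.2 ∧ {z | (delVerts H p.2).Reachable p.1 z}.Infinite
  let step : V × Set V → V × Set V := fun p =>
    if h : Inv p then
      (Classical.choose (konig_step hlf p.2 p.1 h.2), insert p.1 p.2)
    else p
  let st : ℕ → V × Set V := fun n => step^[n] (x, ∅)
  have hdel0 : delVerts H ∅ = H := by
    ext a b; simp [delVerts]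
  have hInv0 : Inv (x, ∅) := by
    constructor
    · simp
    · simpa [hdel0] using hinf
  have key : ∀ n, Inv (st n) ∧ (st (n+1)).2 = insert (st n).1 (st n).2 ∧
      H.Adj (st n).1 (st (n+1)).1 := by
    intro n
    induction n with
    | zero =>
      refine ⟨hInv0, ?_⟩
      have hs : st 1 = step (st 0) := by simp [st]
      have h0 : Inv (st 0) := hInv0
      rw [hs]
      simp only [step, dif_pos h0]
      have := Classical.choose_spec (konig_step hlf (st 0).2 (st 0).1 h0.2)
      exact ⟨trivial, this.1⟩
    | succ n ih =>
      have hInvn : Inv (st n) := ih.1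
      have hs : st (n+1) = step (st n) := Function.iterate_succ_apply' step n _
      have hInv1 : Inv (st (n+1)) := by
        rw [hs]
        simp only [step, dif_pos hInvn]
        have := Classical.choose_spec (konig_step hlf (st n).2 (st n).1 hInvn.2)
        exact ⟨this.2.1, this.2.2⟩
      refine ⟨hInv1, ?_⟩
      have hs2 : st (n+2) = step (st (n+1)) := Function.iterate_succ_apply' step (n+1) _
      rw [hs2]
      simp only [step, dif_pos hInv1]
      have := Classical.choose_spec (konig_step hlf (st (n+1)).2 (st (n+1)).1 hInv1.2)
      exact ⟨trivial, this.1⟩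
  refine ⟨fun n => (st n).1, rfl, ?_, fun n => (key n).2.2⟩
  -- injectivity
  have hmem : ∀ n, (st n).1 ∈ (st (n+1)).2 := by
    intro n; rw [(key n).2.1]; exact Set.mem_insert _ _
  have hmono : ∀ m n, m ≤ n → (st m).2 ⊆ (st n).2 := by
    intro m n hmn
    induction n with
    | zero => simp_all
    | succ n ih =>
      rcases Nat.lt_or_ge m (n+1) with h | h
      · refine (ih (Nat.lt_succ_iff.mp h)).trans ?_
        rw [(key n).2.1]; exact Set.subset_insert _ _
      · have : m = n + 1 := le_antisymm hmn h
        subst this; rfl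
  have hne : ∀ m n, m < n → (st m).1 ≠ (st n).1 := by
    intro m n hmn heq
    have h1 : (st m).1 ∈ (st n).2 := hmono (m+1) n hmn ((key m).2.1 ▸ Set.mem_insert _ _)
    exact (key n).1.1 (heq ▸ h1)
  intro m n heq
  rcases lt_trichotomy m n with h | h | h
  · exact absurd heq (hne m n h)
  · exact h
  · exact absurd heq.symm (hne n m h)

/-! ### The sublevel graph and its components -/

variable (G : SimpleGraph V) (U : Sym2 V → ℝ)

/-- The subgraph of edges with label `< t`. -/
def Glt (t : ℝ) : SimpleGraph V where
  Adj a b := G.Adj a b ∧ U s(a, b) < t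
  symm := ⟨fun a b h => ⟨h.1.symm, by rw [Sym2.eq_swap]; exact h.2⟩⟩
  loopless := ⟨fun a h => G.irrefl h.1⟩

/-- The `Glt`-component of `w`. -/
def Kcomp (t : ℝ) (w : V) : Set V := {z | (Glt G U t).Reachable w z}

/-- Edges with label `< t` and all endpoints in `K`. -/
def EltK (t : ℝ) (K : Set V) : Set (Sym2 V) :=
  {f | f ∈ G.edgeSet ∧ U f < t ∧ ∀ a ∈ f, a ∈ K}

variable {G U}

lemma mem_Kcomp_self {t : ℝ} (w : V) : w ∈ Kcomp G U t w := Reachable.refl _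

lemma Kcomp_adj {t : ℝ} {w z b : V} (hz : z ∈ Kcomp G U t w) (h : (Glt G U t).Adj z b) :
    b ∈ Kcomp G U t w := Reachable.trans hz h.reachable

lemma mem_Kcomp_of_edge {t : ℝ} {w : V} {f : Sym2 V} (hf : f ∈ G.edgeSet) (hlt : U f < t)
    {a : V} (ha : a ∈ f) (haK : a ∈ Kcomp G U t w) : ∀ b ∈ f, b ∈ Kcomp G U t w := by
  induction f with
  | _ p q =>
    rw [SimpleGraph.mem_edgeSet] at hf
    have hpq : (Glt G U t).Adj p q := ⟨hf, hlt⟩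
    rcases Sym2.mem_iff.mp ha with rfl | rfl
    · intro b hb
      rcases Sym2.mem_iff.mp hb with rfl | rfl
      · exact haK
      · exact Kcomp_adj haK hpq
    · intro b hb
      rcases Sym2.mem_iff.mp hb with rfl | rfl
      · exact Kcomp_adj haK hpq.symm
      · exact haK

lemma EltK_subset_biUnion {t : ℝ} {K : Set V} :
    EltK G U t K ⊆ ⋃ v ∈ K, G.incidenceSet v := by
  intro f hf
  obtain ⟨hfe, _, hK⟩ := hf
  induction f with
  | _ p q => exact Set.mem_biUnion (hK p (Sym2.mem_mk_left p q)) ⟨hfe, Sym2.mem_mk_left p q⟩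

lemma incidenceSet_finite (hlf : ∀ v : V, (G.neighborSet v).Finite) (v : V) :
    (G.incidenceSet v).Finite := by
  classical
  have e := G.incidenceSetEquivNeighborSet v
  have h := hlf v
  rw [← Set.finite_coe_iff] at h ⊢
  exact Finite.of_equiv _ e.symm

lemma EltK_finite (hlf : ∀ v : V, (G.neighborSet v).Finite) {t : ℝ} {K : Set V}
    (hK : K.Finite) : (EltK G U t K).Finite :=
  (hK.biUnion (fun v _ => incidenceSet_finite hlf v)).subset EltK_subset_biUnion

lemma Glt_neighbor_finite (hlf : ∀ v : V, (G.neighborSet v).Finite) {t : ℝ} (v : V) :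
    ((Glt G U t).neighborSet v).Finite :=
  (hlf v).subset (fun _ h => h.1)

/-- A walk in `Glt` between `x` and `y` contradicts `s(x,y) ∈ wmsfEdges` (path part). -/
lemma no_Glt_walk {x y : V} (hw : s(x, y) ∈ wmsfEdges G U)
    (p : (Glt G U (U s(x, y))).Walk x y) : False := by
  classical
  set t := U s(x, y) with ht
  have hedges : ∀ e ∈ p.edges, e ∈ G.edgeSet := by
    intro e he
    have := p.edges_subset_edgeSet he
    induction e with
    | _ a b => exact G.mem_edgeSet.mpr (((Glt G U t).mem_edgeSet).mp this).1
  have hlt : ∀ e ∈ p.edges, U e < t := by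
    intro e he
    have := p.edges_subset_edgeSet he
    induction e with
    | _ a b => exact (((Glt G U t).mem_edgeSet).mp this).2
  let q : G.Walk x y := p.transfer G hedges
  have hqe : q.edges = p.edges := p.edges_transfer hedges
  obtain ⟨f, hf, hle⟩ := (hw.2 x y rfl).1 q.bypass q.bypass_isPath
  have hfp : f ∈ p.edges := hqe ▸ q.edges_bypass_subset hf
  exact absurd (hlt f hfp) (not_lt.mpr hle)

lemma Kcomp_disjoint {x y : V} (hw : s(x, y) ∈ wmsfEdges G U) {z : V}
    (hzx : z ∈ Kcomp G U (U s(x, y)) x) (hzy : z ∈ Kcomp G U (U s(x, y)) y) : False := by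
  obtain ⟨p⟩ := hzx.trans hzy.symm
  exact no_Glt_walk hw p

/-- two infinite components contradict the ray clause of wmsf. -/
lemma not_both_infinite {x y : V} (hlf : ∀ v : V, (G.neighborSet v).Finite)
    (hw : s(x, y) ∈ wmsfEdges G U)
    (hx : (Kcomp G U (U s(x, y)) x).Infinite) (hy : (Kcomp G U (U s(x, y)) y).Infinite) :
    False := by
  set t := U s(x, y) with ht
  obtain ⟨r₁, hr₁0, hr₁i, hr₁a⟩ := exists_ray_aux (Glt_neighbor_finite hlf) x hx
  obtain ⟨r₂, hr₂0, hr₂i, hr₂a⟩ := exists_ray_aux (Glt_neighbor_finite hlf) y hy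
  have hr₁K : ∀ n, r₁ n ∈ Kcomp G U t x := by
    intro n
    induction n with
    | zero => rw [hr₁0]; exact mem_Kcomp_self x
    | succ n ih => exact Kcomp_adj ih (hr₁a n)
  have hr₂K : ∀ n, r₂ n ∈ Kcomp G U t y := by
    intro n
    induction n with
    | zero => rw [hr₂0]; exact mem_Kcomp_self y
    | succ n ih => exact Kcomp_adj ih (hr₂a n)
  have hdisj : ∀ m n : ℕ, r₁ m ≠ r₂ n := by
    intro m n heq
    exact Kcomp_disjoint hw (hr₁K m) (heq ▸ hr₂K n)
  obtain ⟨f, hf, hle⟩ := (hw.2 x y rfl).2 r₁ r₂ ⟨hr₁i, fun n => (hr₁a n).1⟩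
    ⟨hr₂i, fun n => (hr₂a n).1⟩ hr₁0 hr₂0 hdisj
  rcases hf with hf | hf <;> obtain ⟨n, rfl⟩ := hf
  · exact absurd (hr₁a n).2 (not_lt.mpr hle)
  · exact absurd (hr₂a n).2 (not_lt.mpr hle)
end Helpers


section BasinMachine
variable {V : Type*} {G : SimpleGraph V} {U : Sym2 V → ℝ}

/-- candidate set of the basin process -/
def bCand (G : SimpleGraph V) (P : Set (Sym2 V) × Set V) : Set (Sym2 V) :=
  {e | e ∈ G.edgeSet ∧ e ∉ P.1 ∧ ∃ x ∈ P.2, x ∈ e}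

lemma sym2_mem_finite (e : Sym2 V) : {x | x ∈ e}.Finite := by
  induction e with
  | _ a b => rw [vertSet_pair]; exact (Set.finite_singleton b).insert a

lemma basinStep_eq (hU : Set.InjOn U G.edgeSet) {P : Set (Sym2 V) × Set V} {e₀ : Sym2 V}
    (h₀ : e₀ ∈ bCand G P) (hmin : ∀ f ∈ bCand G P, U e₀ ≤ U f) :
    basinStep G U P = (insert e₀ P.1, P.2 ∪ {x : V | x ∈ e₀}) := by
  have hex : ∃ e, (e ∈ G.edgeSet ∧ e ∉ P.1 ∧ ∃ x ∈ P.2, x ∈ e) ∧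
      ∀ f, (f ∈ G.edgeSet ∧ f ∉ P.1 ∧ ∃ x ∈ P.2, x ∈ f) → U e ≤ U f :=
    ⟨e₀, h₀, fun f hf => hmin f hf⟩
  have hc := hex.choose_spec
  have hcee : hex.choose = e₀ :=
    hU hc.1.1 h₀.1 (le_antisymm (hc.2 e₀ h₀) (hmin _ hc.1))
  rw [basinStep, dif_pos hex, hcee]

lemma basinStep_fst_subset (P : Set (Sym2 V) × Set V) : P.1 ⊆ (basinStep G U P).1 := by
  rw [basinStep]
  split
  · exact Set.subset_insert _ _
  · exact subset_rfl

lemma basin_fst_mono (v : V) : Monotone fun n => (basinAux G U v n).1 :=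
  monotone_nat_of_le_succ fun n => basinStep_fst_subset _

lemma basinAux_zero (v : V) : basinAux G U v 0 = (∅, {v}) := rfl

lemma basinAux_succ (v : V) (n : ℕ) :
    basinAux G U v (n + 1) = basinStep G U (basinAux G U v n) := rfl

/-- global invariant of the basin process -/
lemma basin_global (v : V) (hlf : ∀ u : V, (G.neighborSet u).Finite) (n : ℕ) :
    v ∈ (basinAux G U v n).2 ∧ (basinAux G U v n).2.Finite ∧
      ∀ f ∈ (basinAux G U v n).1, f ∈ G.edgeSet ∧ ∀ a ∈ f, a ∈ (basinAux G U v n).2 := by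
  induction n with
  | zero => exact ⟨rfl, Set.finite_singleton v, by rw [basinAux_zero]; simp⟩
  | succ n ih =>
    rw [basinAux_succ, basinStep]
    split
    · next h =>
      have hc := h.choose_spec
      refine ⟨Or.inl ih.1, ih.2.1.union (sym2_mem_finite _), ?_⟩
      intro f hf
      rcases Set.mem_insert_iff.mp hf with rfl | hf
      · exact ⟨hc.1.1, fun a ha => Or.inr ha⟩
      · exact ⟨(ih.2.2 f hf).1, fun a ha => Or.inl ((ih.2.2 f hf).2 a ha)⟩
    · exact ih

lemma bCand_finite (hlf : ∀ u : V, (G.neighborSet u).Finite) {P : Set (Sym2 V) × Set V}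
    (hP : P.2.Finite) : (bCand G P).Finite := by
  refine (hP.biUnion (fun u _ => incidenceSet_finite hlf u)).subset ?_
  rintro f ⟨hfE, -, a, haP, haf⟩
  exact Set.mem_biUnion haP ⟨hfE, haf⟩

/-- While the basin process is not saturated, the next step takes an edge
of label `< t` inside the component. -/
lemma basin_step_lt (hU : Set.InjOn U G.edgeSet)
    (hlf : ∀ u : V, (G.neighborSet u).Finite) {t : ℝ} {w v : V} {n : ℕ}
    (hInv1 : (basinAux G U v n).1 ⊆ EltK G U t (Kcomp G U t w))
    (hInv2 : (basinAux G U v n).2 ⊆ Kcomp G U t w)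
    (hwmem : w ∈ (basinAux G U v n).2)
    (hns : (Kcomp G U t w).Infinite ∨
      basinAux G U v n ≠ (EltK G U t (Kcomp G U t w), Kcomp G U t w)) :
    ∃ c, c ∈ bCand G (basinAux G U v n) ∧ (∀ f ∈ bCand G (basinAux G U v n), U c ≤ U f) ∧
      U c < t ∧ (∀ a ∈ c, a ∈ Kcomp G U t w) ∧
      basinAux G U v (n + 1) =
        (insert c (basinAux G U v n).1, (basinAux G U v n).2 ∪ {x : V | x ∈ c}) := by
  classical
  set S := basinAux G U v n with hS
  set K := Kcomp G U t w with hK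
  have hglob := basin_global (G := G) (U := U) v hlf n
  have hcand : ∃ g ∈ bCand G S, U g < t := by
    by_cases h2 : S.2 = K
    · rcases hns with hinf | hne
      · exact absurd (h2 ▸ hglob.2.1) (by simpa using hinf)
      · have h1 : S.1 ≠ EltK G U t K := fun h1 => hne (Prod.ext h1 h2)
        obtain ⟨f, hfElt, hfS⟩ := Set.exists_of_ssubset (hInv1.ssubset_of_ne h1)
        obtain ⟨a, haf⟩ : ∃ a, a ∈ f := by
          induction f with
          | _ p q => exact ⟨p, Sym2.mem_mk_left p q⟩
        exact ⟨f, ⟨hfElt.1, hfS, a, h2 ▸ hfElt.2.2 a haf, haf⟩, hfElt.2.1⟩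
    · obtain ⟨z, hzK, hzS⟩ := Set.exists_of_ssubset (hInv2.ssubset_of_ne h2)
      obtain ⟨a, b, haS, hbS, hab⟩ := crossing (Classical.choice hzK) hwmem hzS
      refine ⟨s(a, b), ⟨G.mem_edgeSet.mpr hab.1, ?_, a, haS, Sym2.mem_mk_left a b⟩, hab.2⟩
      intro hmem
      exact hbS ((hglob.2.2 _ hmem).2 b (Sym2.mem_mk_right a b))
  obtain ⟨g, hgC, hglt⟩ := hcand
  obtain ⟨c, hcC, hcmin⟩ := Set.exists_min_image (bCand G S) U (bCand_finite hlf hglob.2.1)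
    ⟨g, hgC⟩
  have hclt : U c < t := lt_of_le_of_lt (hcmin g hgC) hglt
  obtain ⟨a', ha'S, ha'c⟩ := hcC.2.2
  have hcK : ∀ a ∈ c, a ∈ K := mem_Kcomp_of_edge hcC.1 hclt ha'c (hInv2 ha'S)
  exact ⟨c, hcC, hcmin, hclt, hcK, basinStep_eq hU hcC hcmin⟩

/-- The basin process stays inside the component until saturation. -/
lemma basin_stay_until (hU : Set.InjOn U G.edgeSet)
    (hlf : ∀ u : V, (G.neighborSet u).Finite) {t : ℝ} {w : V} (n : ℕ)
    (hpre : ∀ m < n, basinAux G U w m ≠ (EltK G U t (Kcomp G U t w), Kcomp G U t w)) :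
    (basinAux G U w n).1 ⊆ EltK G U t (Kcomp G U t w) ∧
      (basinAux G U w n).2 ⊆ Kcomp G U t w := by
  induction n with
  | zero =>
    refine ⟨by rw [basinAux_zero]; exact Set.empty_subset _, ?_⟩
    rw [basinAux_zero]
    intro z hz
    rcases hz with rfl
    exact mem_Kcomp_self _
  | succ n ih =>
    have ih' := ih (fun m hm => hpre m (hm.trans (Nat.lt_succ_self n)))
    obtain ⟨c, hcC, -, hclt, hcK, heq⟩ := basin_step_lt hU hlf ih'.1 ih'.2
      (basin_global w hlf n).1 (Or.inr (hpre n (Nat.lt_succ_self n)))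
    rw [heq]
    constructor
    · exact Set.insert_subset ⟨hcC.1, hclt, hcK⟩ ih'.1
    · exact Set.union_subset ih'.2 (fun a ha => hcK a ha)

/-- If the component is finite, the basin process saturates it. -/
lemma basin_fill (hU : Set.InjOn U G.edgeSet)
    (hlf : ∀ u : V, (G.neighborSet u).Finite) {t : ℝ} {w : V} (hKfin : (Kcomp G U t w).Finite) :
    ∃ N, basinAux G U w N = (EltK G U t (Kcomp G U t w), Kcomp G U t w) := by
  by_contra hcon
  push_neg at hcon
  set K := Kcomp G U t w
  set B := EltK G U t K with hB
  have hBfin : B.Finite := EltK_finite hlf hKfin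
  have hstrict : ∀ n, ((basinAux G U w n).1).ncard < ((basinAux G U w (n+1)).1).ncard := by
    intro n
    have hinv := basin_stay_until hU hlf (t := t) (w := w) n (fun m _ => hcon m)
    obtain ⟨c, hcC, -, hclt, hcK, heq⟩ := basin_step_lt hU hlf hinv.1 hinv.2
      (basin_global w hlf n).1 (Or.inr (hcon n))
    rw [heq]
    refine Set.ncard_lt_ncard ⟨Set.subset_insert _ _, ?_⟩ ?_
    · intro hsub
      exact hcC.2.1 (hsub (Set.mem_insert _ _))
    · exact Set.Finite.insert _ (hBfin.subset hinv.1)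
  have hmono : StrictMono fun n => ((basinAux G U w n).1).ncard :=
    strictMono_nat_of_lt_succ hstrict
  have hle : ∀ n, ((basinAux G U w n).1).ncard ≤ B.ncard := fun n =>
    Set.ncard_le_ncard (basin_stay_until hU hlf (t := t) (w := w) n (fun m _ => hcon m)).1 hBfin
  have h1 := hmono.le_apply (x := B.ncard + 1)
  have h2 := hle (B.ncard + 1)
  omega

end BasinMachine


section BasinMain
variable {V : Type*} {G : SimpleGraph V} {U : Sym2 V → ℝ}

lemma sym2_exists_mem (e : Sym2 V) : ∃ a, a ∈ e := by
  induction e with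
  | _ p q => exact ⟨p, Sym2.mem_mk_left p q⟩

lemma pair_union {x y : V} {W : Set V} (hx : x ∈ W) :
    W ∪ {z : V | z ∈ s(x, y)} = insert y W := by
  rw [vertSet_pair]
  ext z
  simp only [Set.mem_union, Set.mem_insert_iff, Set.mem_singleton_iff]
  constructor
  · rintro (h | rfl | rfl)
    · exact Or.inr h
    · exact Or.inr hx
    · exact Or.inl rfl
  · rintro (rfl | h)
    · exact Or.inr (Or.inr rfl)
    · exact Or.inl h

lemma symmDiff_finite_of_eq_union {α : Type*} {A B F : Set α} (h : A = F ∪ B)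
    (hF : F.Finite) : (symmDiff A B).Finite := by
  refine hF.subset ?_
  rw [Set.symmDiff_def]
  rintro z (⟨hzA, hzB⟩ | ⟨hzB, hzA⟩)
  · rcases h ▸ hzA with hz | hz
    · exact hz
    · exact absurd hz hzB
  · exact absurd (h ▸ Set.mem_union_right F hzB : z ∈ A) hzA

lemma y_not_mem_Kx {x y : V} (hw : s(x, y) ∈ wmsfEdges G U) :
    y ∉ Kcomp G U (U s(x, y)) x :=
  fun h => Kcomp_disjoint hw h (mem_Kcomp_self y)

/-- After saturating `K x`, the basin process takes the edge `s(x,y)`. -/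
lemma basin_take (hU : Set.InjOn U G.edgeSet) {x y : V} (hw : s(x, y) ∈ wmsfEdges G U) :
    basinStep G U (EltK G U (U s(x, y)) (Kcomp G U (U s(x, y)) x), Kcomp G U (U s(x, y)) x) =
      (insert (s(x, y)) (EltK G U (U s(x, y)) (Kcomp G U (U s(x, y)) x)),
        insert y (Kcomp G U (U s(x, y)) x)) := by
  set t := U s(x, y) with ht
  set Kx := Kcomp G U t x with hKx
  have h₀ : s(x, y) ∈ bCand G (EltK G U t Kx, Kx) := by
    refine ⟨hw.1, ?_, x, mem_Kcomp_self x, Sym2.mem_mk_left x y⟩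
    intro h
    exact absurd h.2.1 (lt_irrefl t)
  have hmin : ∀ f ∈ bCand G (EltK G U t Kx, Kx), U (s(x, y)) ≤ U f := by
    rintro f ⟨hfE, hfn, a, haK, haf⟩
    by_contra hlt
    push_neg at hlt
    exact hfn ⟨hfE, hlt, mem_Kcomp_of_edge hfE hlt haf haK⟩
  rw [basinStep_eq hU h₀ hmin, pair_union (mem_Kcomp_self x)]

/-- One mirrored step of the two basin processes. -/
lemma basin_mirror_step (hU : Set.InjOn U G.edgeSet)
    (hlf : ∀ u : V, (G.neighborSet u).Finite) {x y : V} (hw : s(x, y) ∈ wmsfEdges G U)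
    {n k : ℕ}
    (hmir1 : (basinAux G U x n).1 =
      insert (s(x, y)) (EltK G U (U s(x, y)) (Kcomp G U (U s(x, y)) x)) ∪
        (basinAux G U y k).1)
    (hmir2 : (basinAux G U x n).2 =
      insert y (Kcomp G U (U s(x, y)) x) ∪ (basinAux G U y k).2)
    (hy1 : (basinAux G U y k).1 ⊆ EltK G U (U s(x, y)) (Kcomp G U (U s(x, y)) y))
    (hy2 : (basinAux G U y k).2 ⊆ Kcomp G U (U s(x, y)) y)
    (hyns : (Kcomp G U (U s(x, y)) y).Infinite ∨
      basinAux G U y k ≠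
        (EltK G U (U s(x, y)) (Kcomp G U (U s(x, y)) y), Kcomp G U (U s(x, y)) y)) :
    (basinAux G U x (n + 1)).1 =
      insert (s(x, y)) (EltK G U (U s(x, y)) (Kcomp G U (U s(x, y)) x)) ∪
        (basinAux G U y (k + 1)).1 ∧
    (basinAux G U x (n + 1)).2 =
      insert y (Kcomp G U (U s(x, y)) x) ∪ (basinAux G U y (k + 1)).2 := by
  set t := U s(x, y) with ht
  set Kx := Kcomp G U t x with hKxd
  set Ky := Kcomp G U t y with hKyd
  obtain ⟨c, hcC, hcmin, hclt, hcK, heqy⟩ :=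
    basin_step_lt hU hlf (w := y) (v := y) hy1 hy2 (basin_global y hlf k).1 hyns
  have hymem : y ∈ (basinAux G U y k).2 := (basin_global y hlf k).1
  -- c is a candidate for the x-process
  have hcx : c ∈ bCand G (basinAux G U x n) := by
    refine ⟨hcC.1, ?_, ?_⟩
    · rw [hmir1]
      rintro (hc | hc)
      · rcases Set.mem_insert_iff.mp hc with rfl | hc
        · exact absurd hclt (lt_irrefl _)
        · obtain ⟨a, hac⟩ := sym2_exists_mem c
          exact Kcomp_disjoint hw (hc.2.2 a hac) (hcK a hac)
      · exact hcC.2.1 hc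
    · obtain ⟨a, haW, hac⟩ := hcC.2.2
      exact ⟨a, hmir2 ▸ Set.mem_union_right _ haW, hac⟩
  have hcxmin : ∀ f ∈ bCand G (basinAux G U x n), U c ≤ U f := by
    rintro f ⟨hfE, hfn, a, haW, haf⟩
    rw [hmir2] at haW
    rcases haW with haI | haWy
    · rcases Set.mem_insert_iff.mp haI with rfl | haKx
      · exact hcmin f ⟨hfE, fun h => hfn (by rw [hmir1]; exact Or.inr h), a, hymem, haf⟩
      · rcases le_or_gt t (U f) with hge | hlt2
        · exact le_trans hclt.le hge
        · exact absurd (by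
            rw [hmir1]
            exact Or.inl (Set.mem_insert_of_mem _
              ⟨hfE, hlt2, mem_Kcomp_of_edge hfE hlt2 haf haKx⟩)) hfn
    · exact hcmin f ⟨hfE, fun h => hfn (by rw [hmir1]; exact Or.inr h), a, haWy, haf⟩
  have hx1 : basinAux G U x (n + 1) =
      (insert c (basinAux G U x n).1, (basinAux G U x n).2 ∪ {z : V | z ∈ c}) := by
    rw [basinAux_succ, basinStep_eq hU hcx hcxmin]
  rw [hx1, heqy, hmir1, hmir2]
  exact ⟨by rw [Set.union_insert], by rw [Set.union_assoc]⟩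

lemma basin_iUnion_tail (v : V) (M : ℕ) :
    invBasin G U v = ⋃ k, (basinAux G U v (M + k)).1 := by
  rw [invBasin]
  apply Set.Subset.antisymm
  · refine Set.iUnion_subset fun n => ?_
    refine Set.subset_iUnion_of_subset n ?_
    exact basin_fst_mono v (by omega : n ≤ M + n)
  · exact Set.iUnion_subset fun k =>
      Set.subset_iUnion (fun n => (basinAux G U v n).1) (M + k)

/-- Case B for the basin: `K x` finite, `K y` infinite. -/
lemma basin_caseB (hU : Set.InjOn U G.edgeSet)
    (hlf : ∀ u : V, (G.neighborSet u).Finite) {x y : V} (hw : s(x, y) ∈ wmsfEdges G U)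
    (hKx : (Kcomp G U (U s(x, y)) x).Finite)
    (hKy : (Kcomp G U (U s(x, y)) y).Infinite) :
    (symmDiff (invBasin G U x) (invBasin G U y)).Finite := by
  set t := U s(x, y) with ht
  set Kx := Kcomp G U t x with hKxd
  set Ky := Kcomp G U t y with hKyd
  set F := insert (s(x, y)) (EltK G U t Kx) with hF
  obtain ⟨N, hN⟩ := basin_fill hU hlf (w := x) hKx
  have hyns : ∀ k, basinAux G U y k ≠ (EltK G U t Ky, Ky) := by
    intro k h
    have h2 := (basin_global (G := G) (U := U) y hlf k).2.1
    rw [h] at h2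
    exact hKy h2
  have hystay := fun k => basin_stay_until hU hlf (t := t) (w := y) k (fun m _ => hyns m)
  have hmir : ∀ k, (basinAux G U x (N + 1 + k)).1 = F ∪ (basinAux G U y k).1 ∧
      (basinAux G U x (N + 1 + k)).2 = insert y Kx ∪ (basinAux G U y k).2 := by
    intro k
    induction k with
    | zero =>
      have : basinAux G U x (N + 1) = (F, insert y Kx) := by
        rw [basinAux_succ, hN, basin_take hU hw]
      rw [this]
      rw [basinAux_zero]
      constructor
      · simp
      · simp
    | succ k ih =>
      exact basin_mirror_step hU hlf hw ih.1 ih.2 (hystay k).1 (hystay k).2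
        (Or.inl hKy) (n := N + 1 + k)
  have hkey : invBasin G U x = F ∪ invBasin G U y := by
    rw [basin_iUnion_tail x (N + 1), invBasin]
    calc ⋃ k, (basinAux G U x (N + 1 + k)).1 = ⋃ k, F ∪ (basinAux G U y k).1 := by
          exact Set.iUnion_congr fun k => (hmir k).1
      _ = F ∪ ⋃ k, (basinAux G U y k).1 := (Set.union_iUnion F _).symm
  exact symmDiff_finite_of_eq_union hkey ((EltK_finite hlf hKx).insert _)

/-- Case C for the basin: reach the canonical merged state. -/
lemma basin_caseC_reach (hU : Set.InjOn U G.edgeSet)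
    (hlf : ∀ u : V, (G.neighborSet u).Finite) {x y : V} (hw : s(x, y) ∈ wmsfEdges G U)
    {N M : ℕ}
    (hN : basinAux G U x N = (EltK G U (U s(x, y)) (Kcomp G U (U s(x, y)) x),
      Kcomp G U (U s(x, y)) x))
    (hM : basinAux G U y M = (EltK G U (U s(x, y)) (Kcomp G U (U s(x, y)) y),
      Kcomp G U (U s(x, y)) y))
    (hMmin : ∀ m < M, basinAux G U y m ≠ (EltK G U (U s(x, y)) (Kcomp G U (U s(x, y)) y),
      Kcomp G U (U s(x, y)) y)) :
    basinAux G U x (N + 1 + M) =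
      (insert (s(x, y)) (EltK G U (U s(x, y)) (Kcomp G U (U s(x, y)) x) ∪
        EltK G U (U s(x, y)) (Kcomp G U (U s(x, y)) y)),
       Kcomp G U (U s(x, y)) x ∪ Kcomp G U (U s(x, y)) y) := by
  set t := U s(x, y) with ht
  set Kx := Kcomp G U t x with hKxd
  set Ky := Kcomp G U t y with hKyd
  set F := insert (s(x, y)) (EltK G U t Kx) with hF
  have hmir : ∀ k, k ≤ M → (basinAux G U x (N + 1 + k)).1 = F ∪ (basinAux G U y k).1 ∧
      (basinAux G U x (N + 1 + k)).2 = insert y Kx ∪ (basinAux G U y k).2 := by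
    intro k
    induction k with
    | zero =>
      intro _
      have : basinAux G U x (N + 1) = (F, insert y Kx) := by
        rw [basinAux_succ, hN, basin_take hU hw]
      rw [this, basinAux_zero]
      exact ⟨by simp, by simp⟩
    | succ k ih =>
      intro hk
      have hk' : k < M := hk
      have ihh := ih hk'.le
      have hystay := basin_stay_until hU hlf (t := t) (w := y) k
        (fun m hm => hMmin m (hm.trans hk'))
      exact basin_mirror_step hU hlf hw ihh.1 ihh.2 hystay.1 hystay.2
        (Or.inr (hMmin k hk')) (n := N + 1 + k)
  have h := hmir M le_rfl
  rw [hM] at h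
  have h1 : (basinAux G U x (N + 1 + M)).1 = insert (s(x, y)) (EltK G U t Kx ∪ EltK G U t Ky) := by
    rw [h.1, hF, Set.insert_union]
  have h2 : (basinAux G U x (N + 1 + M)).2 = Kx ∪ Ky := by
    rw [h.2, Set.insert_union]
    exact Set.insert_eq_self.mpr (Set.mem_union_right Kx (mem_Kcomp_self y))
  exact Prod.ext h1 h2

lemma basin_tail_eq {v w : V} {M M' : ℕ}
    (h : basinAux G U v M = basinAux G U w M') :
    ∀ k, basinAux G U v (M + k) = basinAux G U w (M' + k) := by
  intro k
  induction k with
  | zero => exact h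
  | succ k ih => rw [← Nat.add_assoc, basinAux_succ, ih, ← basinAux_succ, Nat.add_assoc]

/-- Case C for the basin: the two invasion basins agree. -/
lemma basin_caseC (hU : Set.InjOn U G.edgeSet)
    (hlf : ∀ u : V, (G.neighborSet u).Finite) {x y : V} (hw : s(x, y) ∈ wmsfEdges G U)
    (hKx : (Kcomp G U (U s(x, y)) x).Finite)
    (hKy : (Kcomp G U (U s(x, y)) y).Finite) :
    invBasin G U x = invBasin G U y := by
  classical
  set t := U s(x, y) with ht
  have hw' : s(y, x) ∈ wmsfEdges G U := by rwa [Sym2.eq_swap]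
  have ht' : U s(y, x) = t := by rw [Sym2.eq_swap]
  obtain ⟨Nx, hNx⟩ := basin_fill hU hlf (w := x) hKx
  have hfy : ∃ n, basinAux G U y n =
      (EltK G U t (Kcomp G U t y), Kcomp G U t y) := basin_fill hU hlf (w := y) hKy
  set My := Nat.find hfy with hMy
  have hMyspec := Nat.find_spec hfy
  have hMymin : ∀ m < My, basinAux G U y m ≠
      (EltK G U t (Kcomp G U t y), Kcomp G U t y) := fun m hm => Nat.find_min hfy hm
  obtain ⟨Ny, hNy⟩ := basin_fill hU hlf (w := y) hKy
  have hfx : ∃ n, basinAux G U x n =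
      (EltK G U t (Kcomp G U t x), Kcomp G U t x) := basin_fill hU hlf (w := x) hKx
  set Mx := Nat.find hfx with hMx
  have hMxspec := Nat.find_spec hfx
  have hMxmin : ∀ m < Mx, basinAux G U x m ≠
      (EltK G U t (Kcomp G U t x), Kcomp G U t x) := fun m hm => Nat.find_min hfx hm
  have hreach1 := basin_caseC_reach hU hlf hw hNx hMyspec hMymin
  have hreach2 : basinAux G U y (Ny + 1 + Mx) =
      (insert (s(y, x)) (EltK G U (U s(y, x)) (Kcomp G U (U s(y, x)) y) ∪
        EltK G U (U s(y, x)) (Kcomp G U (U s(y, x)) x)),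
       Kcomp G U (U s(y, x)) y ∪ Kcomp G U (U s(y, x)) x) := by
    refine basin_caseC_reach hU hlf hw' ?_ ?_ ?_
    · rw [Sym2.eq_swap (a := y)]; exact hNy
    · rw [Sym2.eq_swap (a := y)]; exact hMxspec
    · rw [Sym2.eq_swap (a := y)]; exact hMxmin
  rw [Sym2.eq_swap (a := y)] at hreach2
  have heq : basinAux G U x (Nx + 1 + My) = basinAux G U y (Ny + 1 + Mx) := by
    rw [hreach1, hreach2,
      Set.union_comm (EltK G U (U s(x, y)) (Kcomp G U (U s(x, y)) y)),
      Set.union_comm (Kcomp G U (U s(x, y)) y)]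
  have htail := basin_tail_eq heq
  rw [basin_iUnion_tail x (Nx + 1 + My), basin_iUnion_tail y (Ny + 1 + Mx)]
  exact Set.iUnion_congr fun k => by rw [htail k]

end BasinMain


section TreeMachine
variable {V : Type*} {G : SimpleGraph V} {U : Sym2 V → ℝ}

lemma invasionStep_eq (hU : Set.InjOn U G.edgeSet) {P : Set (Sym2 V) × Set V} {e₀ : Sym2 V}
    (h₀ : e₀ ∈ cutEdges G P.2) (hmin : ∀ f ∈ cutEdges G P.2, U e₀ ≤ U f) :
    invasionStep G U P = (insert e₀ P.1, P.2 ∪ {x : V | x ∈ e₀}) := by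
  have hex : ∃ e, e ∈ cutEdges G P.2 ∧ ∀ f ∈ cutEdges G P.2, U e ≤ U f := ⟨e₀, h₀, hmin⟩
  have hc := hex.choose_spec
  have hcee : hex.choose = e₀ :=
    hU hc.1.1 h₀.1 (le_antisymm (hc.2 e₀ h₀) (hmin _ hc.1))
  rw [invasionStep, dif_pos hex, hcee]

lemma invasionStep_fst_subset (P : Set (Sym2 V) × Set V) : P.1 ⊆ (invasionStep G U P).1 := by
  rw [invasionStep]
  split
  · exact Set.subset_insert _ _
  · exact subset_rfl

lemma tree_fst_mono (v : V) : Monotone fun n => (invasionAux G U v n).1 :=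
  monotone_nat_of_le_succ fun n => invasionStep_fst_subset _

lemma invasionAux_zero (v : V) : invasionAux G U v 0 = (∅, {v}) := rfl

lemma invasionAux_succ (v : V) (n : ℕ) :
    invasionAux G U v (n + 1) = invasionStep G U (invasionAux G U v n) := rfl

/-- global invariant of the invasion (tree) process -/
lemma tree_global (v : V) (n : ℕ) :
    v ∈ (invasionAux G U v n).2 ∧ (invasionAux G U v n).2.Finite ∧
      ∀ f ∈ (invasionAux G U v n).1, f ∈ G.edgeSet ∧ ∀ a ∈ f, a ∈ (invasionAux G U v n).2 := by
  induction n with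
  | zero => exact ⟨rfl, Set.finite_singleton v, by rw [invasionAux_zero]; simp⟩
  | succ n ih =>
    rw [invasionAux_succ, invasionStep]
    split
    · next h =>
      have hc := h.choose_spec
      refine ⟨Or.inl ih.1, ih.2.1.union (sym2_mem_finite _), ?_⟩
      intro f hf
      rcases Set.mem_insert_iff.mp hf with rfl | hf
      · exact ⟨hc.1.1, fun a ha => Or.inr ha⟩
      · exact ⟨(ih.2.2 f hf).1, fun a ha => Or.inl ((ih.2.2 f hf).2 a ha)⟩
    · exact ih

lemma cutEdges_finite (hlf : ∀ u : V, (G.neighborSet u).Finite) {W : Set V}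
    (hW : W.Finite) : (cutEdges G W).Finite := by
  refine (hW.biUnion (fun u _ => incidenceSet_finite hlf u)).subset ?_
  rintro f ⟨hfE, a, b, rfl, haW, -⟩
  exact Set.mem_biUnion haW ⟨hfE, Sym2.mem_mk_left a b⟩

/-- While the tree process has not exhausted the component, the next step takes an
edge of label `< t` inside the component. -/
lemma tree_step_lt (hU : Set.InjOn U G.edgeSet)
    (hlf : ∀ u : V, (G.neighborSet u).Finite) {t : ℝ} {w v : V} {n : ℕ}
    (hInv2 : (invasionAux G U v n).2 ⊆ Kcomp G U t w)
    (hwmem : w ∈ (invasionAux G U v n).2)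
    (hns : (Kcomp G U t w).Infinite ∨ (invasionAux G U v n).2 ≠ Kcomp G U t w) :
    ∃ c, c ∈ cutEdges G (invasionAux G U v n).2 ∧
      (∀ f ∈ cutEdges G (invasionAux G U v n).2, U c ≤ U f) ∧
      U c < t ∧ (∀ a ∈ c, a ∈ Kcomp G U t w) ∧ (∃ b ∈ c, b ∉ (invasionAux G U v n).2) ∧
      invasionAux G U v (n + 1) =
        (insert c (invasionAux G U v n).1, (invasionAux G U v n).2 ∪ {x : V | x ∈ c}) := by
  classical
  set S := invasionAux G U v n with hS
  set K := Kcomp G U t w with hK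
  have hglob := tree_global (G := G) (U := U) v n
  have hz : ∃ z, z ∈ K ∧ z ∉ S.2 := by
    rcases hns with hinf | hne
    · obtain ⟨z, hz1, hz2⟩ := (hinf.diff hglob.2.1).nonempty
      exact ⟨z, hz1, hz2⟩
    · obtain ⟨z, hz1, hz2⟩ := Set.exists_of_ssubset (hInv2.ssubset_of_ne hne)
      exact ⟨z, hz1, hz2⟩
  obtain ⟨z, hzK, hzS⟩ := hz
  obtain ⟨a, b, haS, hbS, hab⟩ := crossing (Classical.choice hzK) hwmem hzS
  have hgC : s(a, b) ∈ cutEdges G S.2 :=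
    ⟨G.mem_edgeSet.mpr hab.1, a, b, rfl, haS, hbS⟩
  obtain ⟨c, hcC, hcmin⟩ := Set.exists_min_image (cutEdges G S.2) U
    (cutEdges_finite hlf hglob.2.1) ⟨_, hgC⟩
  have hclt : U c < t := lt_of_le_of_lt (hcmin _ hgC) hab.2
  have hcC2 := hcC
  obtain ⟨hcE, a', b', hc', ha'S, hb'S⟩ := hcC2
  have hcK : ∀ a ∈ c, a ∈ K := by
    refine mem_Kcomp_of_edge hcE hclt (a := a') ?_ (hInv2 ha'S)
    rw [hc']; exact Sym2.mem_mk_left a' b'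
  refine ⟨c, hcC, hcmin, hclt, hcK, ⟨b', ?_, hb'S⟩, invasionStep_eq hU hcC hcmin⟩
  rw [hc']; exact Sym2.mem_mk_right a' b'

/-- The tree process stays inside the component until it is exhausted. -/
lemma tree_stay_until (hU : Set.InjOn U G.edgeSet)
    (hlf : ∀ u : V, (G.neighborSet u).Finite) {t : ℝ} {w : V} (n : ℕ)
    (hpre : ∀ m < n, (invasionAux G U w m).2 ≠ Kcomp G U t w) :
    (invasionAux G U w n).1 ⊆ EltK G U t (Kcomp G U t w) ∧
      (invasionAux G U w n).2 ⊆ Kcomp G U t w := by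
  induction n with
  | zero =>
    refine ⟨by rw [invasionAux_zero]; exact Set.empty_subset _, ?_⟩
    rw [invasionAux_zero]
    intro z hz
    rcases hz with rfl
    exact mem_Kcomp_self _
  | succ n ih =>
    have ih' := ih (fun m hm => hpre m (hm.trans (Nat.lt_succ_self n)))
    obtain ⟨c, hcC, -, hclt, hcK, -, heq⟩ := tree_step_lt hU hlf ih'.2
      (tree_global w n).1 (Or.inr (hpre n (Nat.lt_succ_self n)))
    rw [heq]
    constructor
    · exact Set.insert_subset ⟨hcC.1, hclt, hcK⟩ ih'.1
    · exact Set.union_subset ih'.2 (fun a ha => hcK a ha)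

/-- If the component is finite, the tree process exhausts its vertices. -/
lemma tree_fill (hU : Set.InjOn U G.edgeSet)
    (hlf : ∀ u : V, (G.neighborSet u).Finite) {t : ℝ} {w : V}
    (hKfin : (Kcomp G U t w).Finite) :
    ∃ N, (invasionAux G U w N).2 = Kcomp G U t w := by
  by_contra hcon
  push_neg at hcon
  set K := Kcomp G U t w
  have hstrict : ∀ n, ((invasionAux G U w n).2).ncard < ((invasionAux G U w (n+1)).2).ncard := by
    intro n
    have hinv := tree_stay_until hU hlf (t := t) (w := w) n (fun m _ => hcon m)
    obtain ⟨c, hcC, -, hclt, hcK, ⟨b, hbc, hbS⟩, heq⟩ := tree_step_lt hU hlf hinv.2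
      (tree_global w n).1 (Or.inr (hcon n))
    rw [heq]
    refine Set.ncard_lt_ncard ⟨Set.subset_union_left, ?_⟩ ?_
    · intro hsub
      exact hbS (hsub (Set.mem_union_right _ hbc))
    · refine Set.Finite.union ((tree_global w n).2.1) (sym2_mem_finite c)
  have hmono : StrictMono fun n => ((invasionAux G U w n).2).ncard :=
    strictMono_nat_of_lt_succ hstrict
  have hle : ∀ n, ((invasionAux G U w n).2).ncard ≤ K.ncard := fun n =>
    Set.ncard_le_ncard (tree_stay_until hU hlf (t := t) (w := w) n (fun m _ => hcon m)).2 hKfin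
  have h1 := hmono.le_apply (x := K.ncard + 1)
  have h2 := hle (K.ncard + 1)
  omega

/-- After exhausting `K x`, the tree process takes the edge `s(x,y)`. -/
lemma tree_take (hU : Set.InjOn U G.edgeSet) {x y : V} (hw : s(x, y) ∈ wmsfEdges G U)
    (S₁ : Set (Sym2 V)) :
    invasionStep G U (S₁, Kcomp G U (U s(x, y)) x) =
      (insert (s(x, y)) S₁, insert y (Kcomp G U (U s(x, y)) x)) := by
  set t := U s(x, y) with ht
  set Kx := Kcomp G U t x with hKx
  have h₀ : s(x, y) ∈ cutEdges G (((S₁, Kx) : Set (Sym2 V) × Set V).2) :=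
    ⟨hw.1, x, y, rfl, mem_Kcomp_self x, y_not_mem_Kx hw⟩
  have hmin : ∀ f ∈ cutEdges G (((S₁, Kx) : Set (Sym2 V) × Set V).2), U (s(x, y)) ≤ U f := by
    rintro f ⟨hfE, a, b, rfl, haK, hbK⟩
    by_contra hlt
    push_neg at hlt
    exact hbK (mem_Kcomp_of_edge hfE hlt (Sym2.mem_mk_left a b) haK b (Sym2.mem_mk_right a b))
  rw [invasionStep_eq hU h₀ hmin]
  show (insert (s(x, y)) S₁, Kx ∪ {z : V | z ∈ s(x, y)}) =
    (insert (s(x, y)) S₁, insert y Kx)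
  rw [pair_union (mem_Kcomp_self x)]

/-- One mirrored step of the two tree processes. -/
lemma tree_mirror_step (hU : Set.InjOn U G.edgeSet)
    (hlf : ∀ u : V, (G.neighborSet u).Finite) {x y : V} (hw : s(x, y) ∈ wmsfEdges G U)
    (S₁ : Set (Sym2 V)) {n k : ℕ}
    (hmir1 : (invasionAux G U x n).1 = insert (s(x, y)) S₁ ∪ (invasionAux G U y k).1)
    (hmir2 : (invasionAux G U x n).2 =
      insert y (Kcomp G U (U s(x, y)) x) ∪ (invasionAux G U y k).2)
    (hy2 : (invasionAux G U y k).2 ⊆ Kcomp G U (U s(x, y)) y)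
    (hyns : (Kcomp G U (U s(x, y)) y).Infinite ∨
      (invasionAux G U y k).2 ≠ Kcomp G U (U s(x, y)) y) :
    (invasionAux G U x (n + 1)).1 = insert (s(x, y)) S₁ ∪ (invasionAux G U y (k + 1)).1 ∧
    (invasionAux G U x (n + 1)).2 =
      insert y (Kcomp G U (U s(x, y)) x) ∪ (invasionAux G U y (k + 1)).2 := by
  set t := U s(x, y) with ht
  set Kx := Kcomp G U t x with hKxd
  set Ky := Kcomp G U t y with hKyd
  obtain ⟨c, hcC, hcmin, hclt, hcK, -, heqy⟩ :=
    tree_step_lt hU hlf (w := y) (v := y) hy2 (tree_global y k).1 hyns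
  have hymem : y ∈ (invasionAux G U y k).2 := (tree_global y k).1
  obtain ⟨hcE, a, b, hc', haWy, hbWy⟩ := hcC
  have hbKy : b ∈ Ky := hcK b (by rw [hc']; exact Sym2.mem_mk_right a b)
  -- c is a cut edge for the x-process
  have hcx : c ∈ cutEdges G (invasionAux G U x n).2 := by
    refine ⟨hcE, a, b, hc', ?_, ?_⟩
    · rw [hmir2]; exact Set.mem_union_right _ haWy
    · rw [hmir2]
      rintro (hb | hb)
      · rcases Set.mem_insert_iff.mp hb with rfl | hb
        · exact hbWy hymem
        · exact Kcomp_disjoint hw hb hbKy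
      · exact hbWy hb
  have hcxmin : ∀ f ∈ cutEdges G (invasionAux G U x n).2, U c ≤ U f := by
    rintro f ⟨hfE, a', b', rfl, haW, hbW⟩
    rw [hmir2] at haW
    have hbW2 : b' ∉ (invasionAux G U y k).2 := fun h =>
      hbW (hmir2 ▸ Set.mem_union_right _ h)
    rcases haW with haI | haWy'
    · rcases Set.mem_insert_iff.mp haI with rfl | haKx
      · exact hcmin _ ⟨hfE, a', b', rfl, hymem, hbW2⟩
      · rcases le_or_gt t (U s(a', b')) with hge | hlt2
        · exact le_trans hclt.le hge
        · exfalso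
          apply hbW
          rw [hmir2]
          exact Or.inl (Set.mem_insert_of_mem _
            (mem_Kcomp_of_edge hfE hlt2 (Sym2.mem_mk_left a' b') haKx b'
              (Sym2.mem_mk_right a' b')))
    · exact hcmin _ ⟨hfE, a', b', rfl, haWy', hbW2⟩
  have hx1 : invasionAux G U x (n + 1) =
      (insert c (invasionAux G U x n).1, (invasionAux G U x n).2 ∪ {z : V | z ∈ c}) := by
    rw [invasionAux_succ, invasionStep_eq hU hcx hcxmin]
  rw [hx1, heqy, hmir1, hmir2]
  exact ⟨by rw [Set.union_insert], by rw [Set.union_assoc]⟩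

lemma tree_iUnion_tail (v : V) (M : ℕ) :
    invTree G U v = ⋃ k, (invasionAux G U v (M + k)).1 := by
  rw [invTree]
  apply Set.Subset.antisymm
  · refine Set.iUnion_subset fun n => ?_
    refine Set.subset_iUnion_of_subset n ?_
    exact tree_fst_mono v (by omega : n ≤ M + n)
  · exact Set.iUnion_subset fun k =>
      Set.subset_iUnion (fun n => (invasionAux G U v n).1) (M + k)

/-- Case B for the tree: `K x` finite, `K y` infinite. -/
lemma tree_caseB (hU : Set.InjOn U G.edgeSet)
    (hlf : ∀ u : V, (G.neighborSet u).Finite) {x y : V} (hw : s(x, y) ∈ wmsfEdges G U)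
    (hKx : (Kcomp G U (U s(x, y)) x).Finite)
    (hKy : (Kcomp G U (U s(x, y)) y).Infinite) :
    (symmDiff (invTree G U x) (invTree G U y)).Finite := by
  set t := U s(x, y) with ht
  set Kx := Kcomp G U t x with hKxd
  set Ky := Kcomp G U t y with hKyd
  have hfx : ∃ n, (invasionAux G U x n).2 = Kx := tree_fill hU hlf (w := x) hKx
  set N := Nat.find hfx with hNd
  have hN : (invasionAux G U x N).2 = Kx := Nat.find_spec hfx
  have hS₁ : (invasionAux G U x N).1 ⊆ EltK G U t Kx :=
    (tree_stay_until hU hlf (t := t) (w := x) N (fun m hm => Nat.find_min hfx hm)).1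
  set S₁ := (invasionAux G U x N).1 with hS₁d
  set F := insert (s(x, y)) S₁ with hF
  have hyns : ∀ k, (invasionAux G U y k).2 ≠ Ky := by
    intro k h
    have h2 := (tree_global (G := G) (U := U) y k).2.1
    rw [h] at h2
    exact hKy h2
  have hystay := fun k => tree_stay_until hU hlf (t := t) (w := y) k (fun m _ => hyns m)
  have hmir : ∀ k, (invasionAux G U x (N + 1 + k)).1 = F ∪ (invasionAux G U y k).1 ∧
      (invasionAux G U x (N + 1 + k)).2 = insert y Kx ∪ (invasionAux G U y k).2 := by
    intro k
    induction k with
    | zero =>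
      have hstep : invasionAux G U x (N + 1) = (F, insert y Kx) := by
        rw [invasionAux_succ]
        have : invasionAux G U x N = (S₁, Kx) := Prod.ext rfl hN
        rw [this, tree_take hU hw]
      rw [hstep, invasionAux_zero]
      exact ⟨by simp, by simp⟩
    | succ k ih =>
      exact tree_mirror_step hU hlf hw S₁ ih.1 ih.2 (hystay k).2 (Or.inl hKy)
        (n := N + 1 + k)
  have hkey : invTree G U x = F ∪ invTree G U y := by
    rw [tree_iUnion_tail x (N + 1), invTree]
    calc ⋃ k, (invasionAux G U x (N + 1 + k)).1 = ⋃ k, F ∪ (invasionAux G U y k).1 :=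
          Set.iUnion_congr fun k => (hmir k).1
      _ = F ∪ ⋃ k, (invasionAux G U y k).1 := (Set.union_iUnion F _).symm
  exact symmDiff_finite_of_eq_union hkey (((EltK_finite hlf hKx).subset hS₁).insert _)

end TreeMachine


section FinalAssembly
variable {V : Type*} {G : SimpleGraph V} {U : Sym2 V → ℝ}

/-- Case C for the tree: reach the canonical merged state. -/
lemma tree_caseC_reach (hU : Set.InjOn U G.edgeSet)
    (hlf : ∀ u : V, (G.neighborSet u).Finite) {x y : V} (hw : s(x, y) ∈ wmsfEdges G U)
    {Nx Ny : ℕ}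
    (hNx : (invasionAux G U x Nx).2 = Kcomp G U (U s(x, y)) x)
    (hNy : (invasionAux G U y Ny).2 = Kcomp G U (U s(x, y)) y)
    (hNymin : ∀ m < Ny, (invasionAux G U y m).2 ≠ Kcomp G U (U s(x, y)) y) :
    invasionAux G U x (Nx + 1 + Ny) =
      (insert (s(x, y)) ((invasionAux G U x Nx).1 ∪ (invasionAux G U y Ny).1),
        Kcomp G U (U s(x, y)) x ∪ Kcomp G U (U s(x, y)) y) := by
  set t := U s(x, y) with ht
  set Kx := Kcomp G U t x with hKxd
  set Ky := Kcomp G U t y with hKyd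
  set S₁ := (invasionAux G U x Nx).1 with hS₁d
  have hmir : ∀ k, k ≤ Ny →
      (invasionAux G U x (Nx + 1 + k)).1 = insert (s(x, y)) S₁ ∪ (invasionAux G U y k).1 ∧
      (invasionAux G U x (Nx + 1 + k)).2 = insert y Kx ∪ (invasionAux G U y k).2 := by
    intro k
    induction k with
    | zero =>
      intro _
      have hstep : invasionAux G U x (Nx + 1) = (insert (s(x, y)) S₁, insert y Kx) := by
        rw [invasionAux_succ]
        have : invasionAux G U x Nx = (S₁, Kx) := Prod.ext rfl hNx
        rw [this, tree_take hU hw]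
      rw [hstep, invasionAux_zero]
      exact ⟨by simp, by simp⟩
    | succ k ih =>
      intro hk
      have hk' : k < Ny := hk
      have ihh := ih hk'.le
      have hystay := tree_stay_until hU hlf (t := t) (w := y) k
        (fun m hm => hNymin m (hm.trans hk'))
      exact tree_mirror_step hU hlf hw S₁ ihh.1 ihh.2 hystay.2
        (Or.inr (hNymin k hk')) (n := Nx + 1 + k)
  have h := hmir Ny le_rfl
  refine Prod.ext ?_ ?_
  · rw [h.1, Set.insert_union]
  · rw [h.2, hNy, Set.insert_union]
    exact Set.insert_eq_self.mpr (Set.mem_union_right Kx (mem_Kcomp_self y))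

lemma tree_tail_eq {v w : V} {M M' : ℕ}
    (h : invasionAux G U v M = invasionAux G U w M') :
    ∀ k, invasionAux G U v (M + k) = invasionAux G U w (M' + k) := by
  intro k
  induction k with
  | zero => exact h
  | succ k ih => rw [← Nat.add_assoc, invasionAux_succ, ih, ← invasionAux_succ, Nat.add_assoc]

/-- Case C for the tree: the two invasion trees agree. -/
lemma tree_caseC (hU : Set.InjOn U G.edgeSet)
    (hlf : ∀ u : V, (G.neighborSet u).Finite) {x y : V} (hw : s(x, y) ∈ wmsfEdges G U)
    (hKx : (Kcomp G U (U s(x, y)) x).Finite)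
    (hKy : (Kcomp G U (U s(x, y)) y).Finite) :
    invTree G U x = invTree G U y := by
  classical
  set t := U s(x, y) with ht
  have hw' : s(y, x) ∈ wmsfEdges G U := by rwa [Sym2.eq_swap]
  have hfx : ∃ n, (invasionAux G U x n).2 = Kcomp G U t x := tree_fill hU hlf hKx
  have hfy : ∃ n, (invasionAux G U y n).2 = Kcomp G U t y := tree_fill hU hlf hKy
  set Nx := Nat.find hfx with hNxd
  set Ny := Nat.find hfy with hNyd
  have hNx : (invasionAux G U x Nx).2 = Kcomp G U t x := Nat.find_spec hfx
  have hNy : (invasionAux G U y Ny).2 = Kcomp G U t y := Nat.find_spec hfy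
  have hNxmin : ∀ m < Nx, (invasionAux G U x m).2 ≠ Kcomp G U t x :=
    fun m hm => Nat.find_min hfx hm
  have hNymin : ∀ m < Ny, (invasionAux G U y m).2 ≠ Kcomp G U t y :=
    fun m hm => Nat.find_min hfy hm
  have hreach1 := tree_caseC_reach hU hlf hw hNx hNy hNymin
  have hreach2 : invasionAux G U y (Ny + 1 + Nx) =
      (insert (s(y, x)) ((invasionAux G U y Ny).1 ∪ (invasionAux G U x Nx).1),
        Kcomp G U (U s(y, x)) y ∪ Kcomp G U (U s(y, x)) x) := by
    refine tree_caseC_reach hU hlf hw' ?_ ?_ ?_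
    · rw [Sym2.eq_swap (a := y)]; exact hNy
    · rw [Sym2.eq_swap (a := y)]; exact hNx
    · rw [Sym2.eq_swap (a := y)]; exact hNxmin
  rw [Sym2.eq_swap (a := y)] at hreach2
  have heq : invasionAux G U x (Nx + 1 + Ny) = invasionAux G U y (Ny + 1 + Nx) := by
    rw [hreach1, hreach2, Set.union_comm ((invasionAux G U y Ny).1),
      Set.union_comm (Kcomp G U (U s(x, y)) y)]
  have htail := tree_tail_eq heq
  rw [tree_iUnion_tail x (Nx + 1 + Ny), tree_iUnion_tail y (Ny + 1 + Nx)]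
  exact Set.iUnion_congr fun k => by rw [htail k]

/-- The adjacent case of the main theorem. -/
lemma adjacent_case (hU : Set.InjOn U G.edgeSet)
    (hlf : ∀ u : V, (G.neighborSet u).Finite) {x y : V} (hmem : s(x, y) ∈ wmsfEdges G U) :
    (symmDiff (invBasin G U x) (invBasin G U y)).Finite ∧
      (symmDiff (invTree G U x) (invTree G U y)).Finite := by
  have hmem' : s(y, x) ∈ wmsfEdges G U := by rwa [Sym2.eq_swap]
  rcases (Kcomp G U (U s(x, y)) x).finite_or_infinite with hx | hx <;>
    rcases (Kcomp G U (U s(x, y)) y).finite_or_infinite with hy | hy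
  · constructor
    · rw [basin_caseC hU hlf hmem hx hy, symmDiff_self]
      exact Set.finite_empty
    · rw [tree_caseC hU hlf hmem hx hy, symmDiff_self]
      exact Set.finite_empty
  · exact ⟨basin_caseB hU hlf hmem hx hy, tree_caseB hU hlf hmem hx hy⟩
  · have hx' : (Kcomp G U (U s(y, x)) y).Finite := by rw [Sym2.eq_swap (a := y)]; exact hy
    have hy' : (Kcomp G U (U s(y, x)) x).Infinite := by rw [Sym2.eq_swap (a := y)]; exact hx
    constructor
    · rw [symmDiff_comm]
      exact basin_caseB hU hlf hmem' hx' hy'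
    · rw [symmDiff_comm]
      exact tree_caseB hU hlf hmem' hx' hy'
  · exact absurd (not_both_infinite hlf hmem hx hy) not_false

lemma main_reach (hU : Set.InjOn U G.edgeSet)
    (hlf : ∀ u : V, (G.neighborSet u).Finite) {a b : V}
    (p : (SimpleGraph.fromEdgeSet (wmsfEdges G U)).Walk a b) :
    (symmDiff (invBasin G U a) (invBasin G U b)).Finite ∧
      (symmDiff (invTree G U a) (invTree G U b)).Finite := by
  induction p with
  | nil =>
    constructor <;> (rw [symmDiff_self]; exact Set.finite_empty)
  | @cons a c b h q ih =>
    obtain ⟨hmem, -⟩ := (SimpleGraph.fromEdgeSet_adj _).mp h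
    have h2 := adjacent_case hU hlf hmem
    constructor
    · exact (h2.1.union ih.1).subset (symmDiff_triangle _ _ _)
    · exact (h2.2.union ih.2).subset (symmDiff_triangle _ _ _)

end FinalAssembly


/-- If `x` and `y` lie in the same component of the wired minimal
spanning forest, then the symmetric differences of their invasion basins and of
their invasion trees are finite. -/
theorem stmt10 {V : Type*} [Infinite V] (G : SimpleGraph V)
    (hlf : ∀ v : V, (G.neighborSet v).Finite) (hG : G.Connected)
    (U : Sym2 V → ℝ) (hU : Set.InjOn U G.edgeSet) (x y : V)
    (hxy : (SimpleGraph.fromEdgeSet (wmsfEdges G U)).Reachable x y) :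
    (symmDiff (invBasin G U x) (invBasin G U y)).Finite ∧
    (symmDiff (invTree G U x) (invTree G U y)).Finite := by
  obtain ⟨p⟩ := hxy
  exact main_reach hU hlf p
end

section
/- Let G be a locally finite graph, let U : E → (0,1] be injective, and let p ∈ (0,1). Then the set of edges ω_p := {e ∈ E : U(e) < p · Z_∞(e)} contains no bi-infinite simple path, where Z_∞(e) := inf over bi-infinite simple paths P in G containing e of sup{U(f) : f ∈ P \ {e}} (with Z_∞(e) := 1 if no bi-infinite simple path contains e). -/
open SimpleGraph

open scoped Classical in
/-- `Z_∞(e)`: the infimum over bi-infinite simple paths `P` containing `e` of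
`sup {U(f) : f ∈ P \ {e}}`; defined to be `1` if no bi-infinite simple path
contains `e`. -/
noncomputable def Zinf {V : Type*} (G : SimpleGraph V) (U : Sym2 V → ℝ) (e : Sym2 V) : ℝ :=
  if ∃ r : ℤ → V, IsBiRay G r ∧ e ∈ biRayEdges r then
    sInf {x : ℝ | ∃ r : ℤ → V, IsBiRay G r ∧ e ∈ biRayEdges r ∧
      x = sSup {y : ℝ | ∃ f ∈ biRayEdges r \ {e}, y = U f}}
  else 1

/- If a bi-infinite path `r` lay in `ω_p`, let `M` be the supremum of `U` along `r`. Using `r`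
itself as a competitor in `Z_∞(e)` gives `Z_∞(e) ≤ M` for every edge `e` of `r`, hence
`U(e) < p M` along `r` and so `M ≤ p M`; this is absurd since `M > 0` and `p < 1`. -/

namespace IsBiRay

variable {V : Type*} {G : SimpleGraph V} {r : ℤ → V}

lemma edge_mem_edgeSet (hr : IsBiRay G r) {f : Sym2 V} (hf : f ∈ biRayEdges r) :
    f ∈ G.edgeSet := by
  obtain ⟨n, rfl⟩ := hf
  exact hr.2 n

lemma biRayEdges_diff_singleton_nonempty (hr : IsBiRay G r) (e : Sym2 V) :
    (biRayEdges r \ {e}).Nonempty := by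
  have hne : s(r 0, r (0 + 1)) ≠ s(r 1, r (1 + 1)) := by
    rw [Ne, Sym2.eq_iff]
    rintro (⟨h, -⟩ | ⟨h, -⟩) <;> simpa using hr.1 h
  by_cases he : e = s(r 0, r (0 + 1))
  · exact ⟨_, ⟨1, rfl⟩, by rwa [Set.mem_singleton_iff, he, eq_comm]⟩
  · exact ⟨_, ⟨0, rfl⟩, by rwa [Set.mem_singleton_iff, eq_comm]⟩

variable {U : Sym2 V → ℝ}

lemma bddAbove_image_biRayEdges (hr : IsBiRay G r) (hU : BddAbove (U '' G.edgeSet)) :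
    BddAbove (U '' biRayEdges r) :=
  hU.mono <| Set.image_mono fun _ => hr.edge_mem_edgeSet

lemma Zinf_le_sSup_image (hr : IsBiRay G r) (hU₀ : ∀ f ∈ G.edgeSet, 0 ≤ U f)
    (hU : BddAbove (U '' G.edgeSet)) {e : Sym2 V} (he : e ∈ biRayEdges r) :
    Zinf G U e ≤ sSup (U '' biRayEdges r) := by
  have hset : ∀ r' : ℤ → V, {y | ∃ f ∈ biRayEdges r' \ {e}, y = U f} =
      U '' (biRayEdges r' \ {e}) := fun r' => by
    ext y
    simp [eq_comm (a := y), and_assoc]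
  rw [Zinf, if_pos ⟨r, hr, he⟩]
  simp only [hset]
  have hbelow : BddBelow {x | ∃ r' : ℤ → V, IsBiRay G r' ∧ e ∈ biRayEdges r' ∧
      x = sSup (U '' (biRayEdges r' \ {e}))} := by
    refine ⟨0, ?_⟩
    rintro x ⟨r', hr', -, rfl⟩
    obtain ⟨f, hf⟩ := hr'.biRayEdges_diff_singleton_nonempty e
    exact (hU₀ f (hr'.edge_mem_edgeSet hf.1)).trans
      (le_csSup ((hr'.bddAbove_image_biRayEdges hU).mono
        (Set.image_mono Set.sdiff_subset)) ⟨f, hf, rfl⟩)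
  calc sInf _ ≤ sSup (U '' (biRayEdges r \ {e})) := csInf_le hbelow ⟨r, hr, he, rfl⟩
    _ ≤ sSup (U '' biRayEdges r) :=
      csSup_le_csSup (hr.bddAbove_image_biRayEdges hU)
        ((hr.biRayEdges_diff_singleton_nonempty e).image U) (Set.image_mono Set.sdiff_subset)

end IsBiRay

theorem stmt14_general {V : Type*} (G : SimpleGraph V)
    (U : Sym2 V → ℝ)
    (hU01 : ∀ e ∈ G.edgeSet, U e ∈ Set.Ioc (0 : ℝ) 1)
    (p : ℝ) (hp : p ∈ Set.Ioo (0 : ℝ) 1) :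
    ¬ ∃ r : ℤ → V, IsBiRay G r ∧
        biRayEdges r ⊆ {e : Sym2 V | e ∈ G.edgeSet ∧ U e < p * Zinf G U e} := by
  rintro ⟨r, hr, hsub⟩
  have hU : BddAbove (U '' G.edgeSet) := ⟨1, by rintro _ ⟨f, hf, rfl⟩; exact (hU01 f hf).2⟩
  have hU₀ : ∀ f ∈ G.edgeSet, 0 ≤ U f := fun f hf => (hU01 f hf).1.le
  set M := sSup (U '' biRayEdges r)
  have hbdd : BddAbove (U '' biRayEdges r) := hr.bddAbove_image_biRayEdges hU
  have hM : M ≤ p * M := by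
    refine csSup_le ⟨_, _, ⟨0, rfl⟩, rfl⟩ ?_
    rintro _ ⟨f, hf, rfl⟩
    calc U f ≤ p * Zinf G U f := (hsub hf).2.le
      _ ≤ p * M := mul_le_mul_of_nonneg_left (hr.Zinf_le_sSup_image hU₀ hU hf) hp.1.le
  have hM_pos : 0 < M :=
    (hU01 _ (hr.edge_mem_edgeSet ⟨0, rfl⟩)).1.trans_le (le_csSup hbdd ⟨_, ⟨0, rfl⟩, rfl⟩)
  exact (mul_lt_of_lt_one_left hM_pos hp.2).not_ge hM

/-- For an injective labeling `U : E → (0,1]` of a locally finite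
graph and `p ∈ (0,1)`, the set `ω_p = {e : U(e) < p·Z_∞(e)}` contains no
bi-infinite simple path. -/
theorem stmt14 {V : Type*} (G : SimpleGraph V)
    (hlf : ∀ v : V, (G.neighborSet v).Finite)
    (U : Sym2 V → ℝ) (hU : Set.InjOn U G.edgeSet)
    (hU01 : ∀ e ∈ G.edgeSet, U e ∈ Set.Ioc (0 : ℝ) 1)
    (p : ℝ) (hp : p ∈ Set.Ioo (0 : ℝ) 1) :
    ¬ ∃ r : ℤ → V, IsBiRay G r ∧
        biRayEdges r ⊆ {e : Sym2 V | e ∈ G.edgeSet ∧ U e < p * Zinf G U e} :=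
  stmt14_general G U hU01 p hp
end
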